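/- arXiv:2401.17445 — 10 statements merged into one kernel-verified Lean document; each statement's English description precedes it below -/
import Mathlib

section
/- Let K be a number field and k the order of the group of roots of unity in K. If π₁ and π₂ are Weil q-numbers in K (algebraic integers all of whose complex embeddings have absolute value q^{1/2}) such that v(π₁) = v(π₂) for every p-adic valuation v of K, then π₁^k = π₂^k. -/
/-!
Away from `p` a Weil `q`-number is a unit: the square of its norm is `q ^ [K : ℚ]`, and it divides
its own norm. Together with the hypothesis at the primes above `p`, `π₁ / π₂` has valuation `1`
everywhere, hence is a unit of `𝓞 K`; all its conjugates have absolute value `1`, so by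
Kronecker's theorem it is a root of unity in `K`, and its `k`-th power is `1`.
-/

open NumberField IsDedekindDomain Module

theorem NumberField.abs_norm_eq_pow_finrank_of_forall_norm_eq {K : Type*} [Field K]
    [NumberField K] {x : K} {r : ℝ} (h : ∀ σ : K →+* ℂ, ‖σ x‖ = r) :
    |(Algebra.norm ℚ x : ℝ)| = r ^ finrank ℚ K := by
  have hw (w : InfinitePlace K) : w x = r := by rw [← w.norm_embedding_eq, h]
  rw [← Rat.cast_abs, ← InfinitePlace.prod_eq_abs_norm]
  simp only [hw, Finset.prod_pow_eq_pow_sum, InfinitePlace.sum_mult_eq]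

theorem NumberField.RingOfIntegers.dvd_pow_finrank_of_forall_norm_eq_sqrt {K : Type*} [Field K]
    [NumberField K] {q : ℕ} {a : 𝓞 K} (h : ∀ σ : K →+* ℂ, ‖σ (a : K)‖ = √q) :
    a ∣ (q : 𝓞 K) ^ finrank ℚ K := by
  have hsq : Algebra.norm ℤ a ^ 2 = (q : ℤ) ^ finrank ℚ K := by
    have habs := abs_norm_eq_pow_finrank_of_forall_norm_eq h
    rw [← Algebra.coe_norm_int, Rat.cast_intCast] at habs
    have hsqℝ : (Algebra.norm ℤ a : ℝ) ^ 2 = (q : ℝ) ^ finrank ℚ K := by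
      rw [← sq_abs, habs, ← pow_mul, mul_comm, pow_mul, Real.sq_sqrt q.cast_nonneg]
    exact_mod_cast hsqℝ
  calc a ∣ algebraMap ℤ (𝓞 K) (Algebra.norm ℤ a) := by
        simpa [Algebra.intNorm_eq_norm] using Algebra.dvd_algebraMap_intNorm_self ℤ (𝓞 K) a
    _ ∣ algebraMap ℤ (𝓞 K) (Algebra.norm ℤ a ^ 2) := map_dvd _ (dvd_pow_self _ two_ne_zero)
    _ = (q : 𝓞 K) ^ finrank ℚ K := by simp [hsq]

theorem IsDedekindDomain.HeightOneSpectrum.exists_unit_of_forall_valuation_eq_one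
    {R : Type*} [CommRing R] [IsDedekindDomain R] {K : Type*} [Field K] [Algebra R K]
    [IsFractionRing R K] {x : K} (hx : x ≠ 0) (h : ∀ v : HeightOneSpectrum R, v.valuation K x = 1) :
    ∃ u : Rˣ, algebraMap R K u = x := by
  obtain ⟨a, ha⟩ := mem_integers_of_valuation_le_one K x (fun v ↦ (h v).le)
  obtain ⟨b, hb⟩ := mem_integers_of_valuation_le_one K x⁻¹
    (fun v ↦ by rw [map_inv₀, h v, inv_one])
  have hab : a * b = 1 := IsFractionRing.injective R K (by simp [ha, hb, hx])
  exact ⟨⟨a, b, hab, mul_comm a b ▸ hab⟩, ha⟩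

theorem NumberField.Units.pow_torsionOrder_eq_one_of_forall_norm_eq_one {K : Type*} [Field K]
    [NumberField K] {u : (𝓞 K)ˣ} (h : ∀ σ : K →+* ℂ, ‖σ (u : K)‖ = 1) :
    u ^ torsionOrder K = 1 := by
  have hu : u ∈ torsion K := (mem_torsion K).mpr fun w ↦ by rw [← w.norm_embedding_eq, h]
  rw [← rootsOfUnity_eq_torsion, mem_rootsOfUnity] at hu
  exact hu

theorem NumberField.valuation_eq_one_of_forall_norm_eq_sqrt {K : Type*} [Field K] [NumberField K]
    {p n q : ℕ} (hq : q = p ^ n) {a : 𝓞 K} (h : ∀ σ : K →+* ℂ, ‖σ (a : K)‖ = √q)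
    {v : HeightOneSpectrum (𝓞 K)} (hv : (p : 𝓞 K) ∉ v.asIdeal) :
    v.valuation K (a : K) = 1 := by
  refine (v.valuation_eq_one_iff_notMem (K := K)).mpr fun ha ↦ hv ?_
  have := v.asIdeal.mem_of_dvd (RingOfIntegers.dvd_pow_finrank_of_forall_norm_eq_sqrt h) ha
  rw [hq, Nat.cast_pow, ← pow_mul] at this
  exact v.isPrime.mem_of_pow_mem _ this

theorem NumberField.ne_zero_of_forall_norm_eq {K : Type*} [Field K] [NumberField K] {x : K}
    {r : ℝ} (hr : r ≠ 0) (h : ∀ σ : K →+* ℂ, ‖σ x‖ = r) : x ≠ 0 := by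
  rintro rfl
  obtain ⟨σ⟩ := (inferInstance : Nonempty (K →+* ℂ))
  simpa [eq_comm, hr] using h σ

theorem stmt0_general (p n q : ℕ) (hp : p.Prime) (hq : q = p ^ n)
    (K : Type*) [Field K] [NumberField K] (π₁ π₂ : K)
    (h₁ : IsIntegral ℤ π₁) (h₂ : IsIntegral ℤ π₂)
    (hw₁ : ∀ σ : K →+* ℂ, ‖σ π₁‖ = Real.sqrt q)
    (hw₂ : ∀ σ : K →+* ℂ, ‖σ π₂‖ = Real.sqrt q)
    (hval : ∀ v : HeightOneSpectrum (𝓞 K),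
      (p : 𝓞 K) ∈ v.asIdeal → v.valuation K π₁ = v.valuation K π₂) :
    π₁ ^ (NumberField.Units.torsionOrder K : ℕ) =
      π₂ ^ (NumberField.Units.torsionOrder K : ℕ) := by
  obtain ⟨a₁, rfl⟩ : ∃ a : 𝓞 K, (a : K) = π₁ := ⟨⟨π₁, h₁⟩, rfl⟩
  obtain ⟨a₂, rfl⟩ : ∃ a : 𝓞 K, (a : K) = π₂ := ⟨⟨π₂, h₂⟩, rfl⟩
  have hsqrt : √q ≠ 0 := by
    rw [hq]; exact Real.sqrt_ne_zero'.mpr (mod_cast pow_pos hp.pos n)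
  have hπ₂ := ne_zero_of_forall_norm_eq hsqrt hw₂
  have hv (v : HeightOneSpectrum (𝓞 K)) : v.valuation K (a₁ / a₂ : K) = 1 := by
    rw [map_div₀, div_eq_one_iff_eq ((Valuation.ne_zero_iff _).mpr hπ₂)]
    by_cases hpv : (p : 𝓞 K) ∈ v.asIdeal
    · exact hval v hpv
    · rw [valuation_eq_one_of_forall_norm_eq_sqrt hq hw₁ hpv,
        valuation_eq_one_of_forall_norm_eq_sqrt hq hw₂ hpv]
  obtain ⟨u, hu⟩ := HeightOneSpectrum.exists_unit_of_forall_valuation_eq_one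
    (div_ne_zero (ne_zero_of_forall_norm_eq hsqrt hw₁) hπ₂) hv
  have hu_norm (σ : K →+* ℂ) : ‖σ (u : K)‖ = 1 := by
    rw [hu, map_div₀, norm_div, hw₁, hw₂, div_self hsqrt]
  have hpow : ((a₁ : K) / a₂) ^ Units.torsionOrder K = 1 := by
    rw [← hu, ← map_pow, ← Units.val_pow_eq_pow_val,
      Units.pow_torsionOrder_eq_one_of_forall_norm_eq_one hu_norm, Units.val_one, map_one]
  rwa [div_pow, div_eq_one_iff_eq (pow_ne_zero _ hπ₂)] at hpow

/-- Let `K` be a number field and `k` the order of the group of roots of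
unity in `K`. If `π₁` and `π₂` are Weil `q`-numbers in `K` (algebraic integers all of whose
complex embeddings have absolute value `q^(1/2)`) such that `v(π₁) = v(π₂)` for every
`p`-adic valuation `v` of `K`, then `π₁ ^ k = π₂ ^ k`. -/
theorem stmt0 (p n q : ℕ) (hp : p.Prime) (hn : 0 < n) (hq : q = p ^ n)
    (K : Type*) [Field K] [NumberField K] (π₁ π₂ : K)
    (h₁ : IsIntegral ℤ π₁) (h₂ : IsIntegral ℤ π₂)
    (hw₁ : ∀ σ : K →+* ℂ, ‖σ π₁‖ = Real.sqrt q)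
    (hw₂ : ∀ σ : K →+* ℂ, ‖σ π₂‖ = Real.sqrt q)
    (hval : ∀ v : HeightOneSpectrum (𝓞 K),
      (p : 𝓞 K) ∈ v.asIdeal → v.valuation K π₁ = v.valuation K π₂) :
    π₁ ^ (NumberField.Units.torsionOrder K : ℕ) =
      π₂ ^ (NumberField.Units.torsionOrder K : ℕ) :=
  stmt0_general p n q hp hq K π₁ π₂ h₁ h₂ hw₁ hw₂ hval
end

section
/- Let α be an algebraic integer lying in a number field K such that every conjugate of α (over ℚ) has absolute value 1. Then α is a root of unity; in particular α^k = 1 where k is the order of the group of roots of unity of K. -/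
open NumberField NumberField.Units

theorem NumberField.pow_torsionOrder_eq_one_of_pow_eq_one {K : Type*} [Field K] [NumberField K]
    {x : K} {m : ℕ} (hm : 0 < m) (hxm : x ^ m = 1) : x ^ torsionOrder K = 1 := by
  set y : 𝓞 K := ⟨x, IsIntegral.of_pow hm (hxm ▸ isIntegral_one)⟩
  have hy : (y : K) = x := rfl
  have hym : y ^ m = 1 := RingOfIntegers.ext (by push_cast [hy]; exact hxm)
  have hy_mem : Units.ofPowEqOne y m hym hm.ne' ∈ rootsOfUnity (torsionOrder K) (𝓞 K) := by
    rw [rootsOfUnity_eq_torsion, torsion, CommGroup.mem_torsion, isOfFinOrder_iff_pow_eq_one]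
    exact ⟨m, hm, Units.pow_ofPowEqOne hym hm.ne'⟩
  rw [mem_rootsOfUnity, Units.ext_iff, Units.val_pow_eq_pow_val, Units.val_ofPowEqOne] at hy_mem
  simpa [hy] using congrArg ((↑) : 𝓞 K → K) hy_mem

/-- **Kronecker.** Let `α` be an algebraic integer lying in a number field `K`
such that every conjugate of `α` over `ℚ` has absolute value `1`. Then `α` is a root of
unity; in particular `α ^ k = 1`, where `k` is the order of the group of roots of unity
of `K`. -/
theorem stmt1 (K : Type*) [Field K] [NumberField K] (α : K)
    (hint : IsIntegral ℤ α)
    (habs : ∀ σ : K →+* ℂ, ‖σ α‖ = 1) :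
    (∃ m : ℕ, 0 < m ∧ α ^ m = 1) ∧ α ^ (NumberField.Units.torsionOrder K : ℕ) = 1 := by
  obtain ⟨m, hm, hαm⟩ := Embeddings.pow_eq_one_of_norm_eq_one K ℂ hint habs
  exact ⟨⟨m, hm, hαm⟩, pow_torsionOrder_eq_one_of_pow_eq_one hm hαm⟩
end

section
/- Let L/K be an extension of number fields and π ∈ L a Weil q-number (q a power of a prime p). Assume π is p-potentially in K, i.e., for every p-adic valuation v of K and any two extensions v₁, v₂ of v to L one has v₁(π) = v₂(π). Then π^k ∈ K, where k is the order of the group of roots of unity in a Galois closure of L. -/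
/-!
Write `x` for the image of `π` in `Lt` and fix `σ ∈ Gal(Lt/K)`. All conjugates of `π` have
absolute value `√q`, so the norm of `x` is `± q^([Lt:ℚ]/2)` and `x` divides a power of `p`: it
is a unit away from `p`. At a prime `W ∣ p` of `Lt`, the valuation of `σ x` is that of `x` at
`σ⁻¹ W`. The valuation normalized by `v(p) = 1` does not change when passing from a prime of `L`
to a prime of `Lt` above it, and `W`, `σ⁻¹ W` restrict to primes of `L` over the same prime of
`K`, so the hypothesis gives `v_W(σ x) = v_W(x)`. Hence `σ x = u x` for a unit `u` all of whose
conjugates have absolute value `1`, i.e. a root of unity of `Lt`; so `σ (x ^ k) = x ^ k`, and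
Galois descent puts `π ^ k` in `K`.
-/

open NumberField IsDedekindDomain

/-- The exponent of the prime `w` in the ideal generated by `x`:
the `w`-adic order of `x`. -/
noncomputable def padicOrd {M : Type*} [Field M] [NumberField M]
    (w : HeightOneSpectrum (𝓞 M)) (x : 𝓞 M) : ℕ := by
  classical
  exact (Associates.mk w.asIdeal).count (Associates.mk (Ideal.span {x} : Ideal (𝓞 M))).factors

/-- The `w`-adic valuation of `x`, normalized so that the valuation of `p` is `1`. -/
noncomputable def normVal {M : Type*} [Field M] [NumberField M]
    (w : HeightOneSpectrum (𝓞 M)) (p : ℕ) (x : 𝓞 M) : ℚ :=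
  (padicOrd w x : ℚ) / (padicOrd w (p : 𝓞 M) : ℚ)

namespace RingEquiv

variable {R S : Type*} [CommRing R] [CommRing S]

def idealMapMulEquiv (e : R ≃+* S) : Ideal R ≃* Ideal S where
  toFun := Ideal.map (e : R →+* S)
  invFun := Ideal.map (e.symm : S →+* R)
  left_inv _ := Ideal.map_of_equiv e
  right_inv _ := Ideal.map_of_equiv e.symm
  map_mul' := Ideal.map_mul (e : R →+* S)

@[simp]
theorem idealMapMulEquiv_apply (e : R ≃+* S) (I : Ideal R) :
    e.idealMapMulEquiv I = I.map (e : R →+* S) :=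
  rfl

end RingEquiv

namespace IsDedekindDomain.HeightOneSpectrum

variable {R S : Type*} [CommRing R] [IsDedekindDomain R] [CommRing S] [IsDedekindDomain S]

theorem intValuation_equivOfRingEquiv (e : R ≃+* S) (v : HeightOneSpectrum R) (x : R) :
    (equivOfRingEquiv e v).intValuation (e x) = v.intValuation x := by
  rcases eq_or_ne x 0 with rfl | hx
  · simp
  have hv : (equivOfRingEquiv e v).asIdeal = e.idealMapMulEquiv v.asIdeal := Ideal.comap_symm e
  have hx' : Ideal.span {e x} = e.idealMapMulEquiv (Ideal.span {x}) := by
    simp [Ideal.map_span]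
  rw [intValuation_eq_exp_neg_multiplicity _ hx, intValuation_eq_exp_neg_multiplicity _ (by simpa),
    hv, hx', multiplicity_map_eq]

theorem associated_of_forall_intValuation_eq {x y : R} (hx : x ≠ 0) (hy : y ≠ 0)
    (h : ∀ v : HeightOneSpectrum R, v.intValuation x = v.intValuation y) : Associated x y := by
  classical
  rw [← Ideal.span_singleton_eq_span_singleton, ← associated_iff_eq,
    ← Associates.mk_eq_mk_iff_associated]
  refine Associates.eq_of_eq_counts (by simpa) (by simpa) fun P hP => ?_
  obtain ⟨J, rfl⟩ := Associates.mk_surjective P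
  have hJ : Prime J :=
    UniqueFactorizationMonoid.irreducible_iff_prime.1 (Associates.irreducible_mk.1 hP)
  simpa [intValuation_if_neg, hx, hy] using h ⟨J, Ideal.isPrime_of_prime hJ, hJ.ne_zero⟩

instance liesOver_under {A B : Type*} [CommRing A] [IsDomain A] [CommRing B] [IsDomain B]
    [Algebra A B] [Algebra.IsIntegral A B] (w : HeightOneSpectrum B) :
    w.asIdeal.LiesOver (w.under A).asIdeal :=
  Ideal.over_under w.asIdeal

end IsDedekindDomain.HeightOneSpectrum

namespace NumberField

open Module

theorem RingOfIntegers.dvd_pow_finrank_of_forall_norm_eq_sqrt_s2 {M : Type*} [Field M]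
    [NumberField M] [IsGalois ℚ M] {x : 𝓞 M} {q : ℕ} (h : ∀ φ : M →+* ℂ, ‖φ x‖ = √q) :
    x ∣ (q : 𝓞 M) ^ finrank ℚ M := by
  have habs : |((Algebra.norm ℚ (x : M) : ℚ) : ℝ)| = √q ^ finrank ℚ M := by
    have := congrArg norm (Algebra.norm_eq_prod_embeddings ℚ ℂ (x : M))
    rwa [norm_prod, Finset.prod_congr rfl fun φ _ => h φ.toRingHom, Finset.prod_const,
      Finset.card_univ, AlgHom.card, eq_ratCast, ← Complex.ofReal_ratCast, Complex.norm_real,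
      Real.norm_eq_abs] at this
  have hsq : RingOfIntegers.norm ℚ x ^ 2 = (q : 𝓞 ℚ) ^ finrank ℚ M := by
    ext
    push_cast
    change Algebra.norm ℚ (x : M) ^ 2 = _
    exact_mod_cast (show (((Algebra.norm ℚ (x : M) : ℚ) : ℝ)) ^ 2 = (q : ℝ) ^ finrank ℚ M by
      rw [← sq_abs, habs, ← pow_mul, mul_comm, pow_mul, Real.sq_sqrt q.cast_nonneg])
  calc x ∣ algebraMap (𝓞 ℚ) (𝓞 M) (RingOfIntegers.norm ℚ x) := RingOfIntegers.dvd_norm ℚ x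
    _ ∣ algebraMap (𝓞 ℚ) (𝓞 M) (RingOfIntegers.norm ℚ x ^ 2) :=
      map_dvd _ (dvd_pow_self _ two_ne_zero)
    _ = (q : 𝓞 M) ^ finrank ℚ M := by rw [hsq, map_pow, map_natCast]

theorem Units.pow_torsionOrder_eq_of_associated {M : Type*} [Field M] [NumberField M]
    {x y : 𝓞 M} (hxy : Associated x y) (hx : x ≠ 0) (h : ∀ φ : M →+* ℂ, ‖φ y‖ = ‖φ x‖) :
    x ^ Units.torsionOrder M = y ^ Units.torsionOrder M := by
  obtain ⟨u, rfl⟩ := hxy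
  have hu : u ∈ Units.torsion M := by
    refine (Units.mem_torsion M).2 fun w => ?_
    have hφ := h w.embedding
    push_cast at hφ
    rw [map_mul, norm_mul] at hφ
    rw [← InfinitePlace.norm_embedding_eq]
    exact (mul_eq_left₀ (by simpa using hx)).1 hφ
  rw [← Units.rootsOfUnity_eq_torsion, mem_rootsOfUnity] at hu
  rw [mul_pow, ← Units.val_pow_eq_pow_val, hu, Units.val_one, mul_one]

end NumberField

theorem mem_range_algebraMap_of_forall_algEquiv_apply_eq {K L E : Type*} [Field K] [Field L]
    [Field E] [Algebra K L] [Algebra L E] [Algebra K E] [IsScalarTower K L E] [IsGalois K E]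
    [FiniteDimensional K E] {x : L}
    (h : ∀ σ : E ≃ₐ[K] E, σ (algebraMap L E x) = algebraMap L E x) :
    x ∈ (algebraMap K L).range := by
  obtain ⟨c, hc⟩ := (IsGalois.mem_range_algebraMap_iff_fixed _).2 h
  exact ⟨c, (algebraMap L E).injective (by rwa [← IsScalarTower.algebraMap_apply])⟩

section Valuations

variable {M N : Type*} [Field M] [NumberField M] [Field N] [NumberField N]

open HeightOneSpectrum

theorem intValuation_eq_exp_neg_padicOrd (w : HeightOneSpectrum (𝓞 M)) {x : 𝓞 M} (hx : x ≠ 0) :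
    w.intValuation x = WithZero.exp (-(padicOrd w x : ℤ)) :=
  w.intValuation_if_neg hx

theorem padicOrd_ne_zero_of_mem {w : HeightOneSpectrum (𝓞 M)} {x : 𝓞 M} (hx : x ≠ 0)
    (hxw : x ∈ w.asIdeal) : padicOrd w x ≠ 0 := by
  have := (w.intValuation_lt_one_iff_mem x).2 hxw
  rw [intValuation_eq_exp_neg_padicOrd w hx] at this
  intro h
  simp [h] at this

theorem padicOrd_equivOfRingEquiv (e : 𝓞 M ≃+* 𝓞 N) (v : HeightOneSpectrum (𝓞 M)) {x : 𝓞 M}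
    (hx : x ≠ 0) : padicOrd (equivOfRingEquiv e v) (e x) = padicOrd v x := by
  have := intValuation_equivOfRingEquiv e v x
  rwa [intValuation_eq_exp_neg_padicOrd _ hx,
    intValuation_eq_exp_neg_padicOrd _ (by simpa using hx), WithZero.exp_inj, neg_inj,
    Nat.cast_inj] at this

theorem padicOrd_algebraMap [Algebra M N] (v : HeightOneSpectrum (𝓞 M))
    (w : HeightOneSpectrum (𝓞 N)) [w.asIdeal.LiesOver v.asIdeal] {x : 𝓞 M} (hx : x ≠ 0) :
    padicOrd w (algebraMap (𝓞 M) (𝓞 N) x) =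
      v.asIdeal.ramificationIdx' w.asIdeal * padicOrd v x := by
  have := intValuation_liesOver v w x
  rwa [intValuation_eq_exp_neg_padicOrd _ hx,
    intValuation_eq_exp_neg_padicOrd _ (by simpa using hx), ← WithZero.exp_nsmul,
    WithZero.exp_inj, smul_neg, neg_inj, nsmul_eq_mul, ← Nat.cast_mul, Nat.cast_inj,
    eq_comm] at this

theorem normVal_algebraMap [Algebra M N] (v : HeightOneSpectrum (𝓞 M))
    (w : HeightOneSpectrum (𝓞 N)) [w.asIdeal.LiesOver v.asIdeal] {p : ℕ} (hp : p ≠ 0) {x : 𝓞 M}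
    (hx : x ≠ 0) : normVal w p (algebraMap (𝓞 M) (𝓞 N) x) = normVal v p x := by
  have he : (v.asIdeal.ramificationIdx' w.asIdeal : ℚ) ≠ 0 := Nat.cast_ne_zero.2
    (Ideal.IsDedekindDomain.ramificationIdx'_ne_zero_of_liesOver w.asIdeal v.ne_bot)
  rw [normVal, normVal, ← map_natCast (algebraMap (𝓞 M) (𝓞 N)), padicOrd_algebraMap v w hx,
    padicOrd_algebraMap v w (Nat.cast_ne_zero.2 hp), Nat.cast_mul, Nat.cast_mul,
    mul_div_mul_left _ _ he]

theorem normVal_equivOfRingEquiv (e : 𝓞 M ≃+* 𝓞 N) (v : HeightOneSpectrum (𝓞 M)) {p : ℕ}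
    (hp : p ≠ 0) {x : 𝓞 M} (hx : x ≠ 0) :
    normVal (equivOfRingEquiv e v) p (e x) = normVal v p x := by
  rw [normVal, normVal, ← map_natCast e, padicOrd_equivOfRingEquiv e v hx,
    padicOrd_equivOfRingEquiv e v (Nat.cast_ne_zero.2 hp)]

theorem padicOrd_eq_of_normVal_eq {w : HeightOneSpectrum (𝓞 M)} {p : ℕ} (hp : p ≠ 0)
    (hpw : (p : 𝓞 M) ∈ w.asIdeal) {x y : 𝓞 M} (h : normVal w p x = normVal w p y) :
    padicOrd w x = padicOrd w y := by
  exact_mod_cast (div_left_inj' (Nat.cast_ne_zero.2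
    (padicOrd_ne_zero_of_mem (Nat.cast_ne_zero.2 hp) hpw))).1 h

end Valuations

def IsPotentiallyIn (K : Type*) {L : Type*} [Field K] [Field L] [NumberField L]
    [Algebra K L] (p : ℕ) (π : 𝓞 L) : Prop :=
  ∀ w₁ w₂ : HeightOneSpectrum (𝓞 L), (p : 𝓞 L) ∈ w₁.asIdeal → (p : 𝓞 L) ∈ w₂.asIdeal →
    w₁.asIdeal.comap (algebraMap (𝓞 K) (𝓞 L)) = w₂.asIdeal.comap (algebraMap (𝓞 K) (𝓞 L)) →
    normVal w₁ p π = normVal w₂ p π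

namespace IsPotentiallyIn

open HeightOneSpectrum

variable {K L N : Type*} [Field K] [Field L] [NumberField L] [Field N]
  [NumberField N] [Algebra K L] [Algebra L N] {p : ℕ} {π : 𝓞 L} {σ : 𝓞 N ≃+* 𝓞 N}

theorem intValuation_conj_eq (hπ : IsPotentiallyIn K p π) (hp : p ≠ 0) (hπ0 : π ≠ 0)
    (hσ : ∀ c : 𝓞 K, σ (algebraMap (𝓞 L) (𝓞 N) (algebraMap (𝓞 K) (𝓞 L) c)) =
      algebraMap (𝓞 L) (𝓞 N) (algebraMap (𝓞 K) (𝓞 L) c))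
    {W : HeightOneSpectrum (𝓞 N)} (hW : (p : 𝓞 N) ∈ W.asIdeal) :
    W.intValuation (σ (algebraMap (𝓞 L) (𝓞 N) π)) =
      W.intValuation (algebraMap (𝓞 L) (𝓞 N) π) := by
  set V := (equivOfRingEquiv σ).symm W
  have hWV : equivOfRingEquiv σ V = W := (equivOfRingEquiv σ).apply_symm_apply W
  have hVW : V.asIdeal = W.asIdeal.comap σ := rfl
  have hp_under : ∀ U : HeightOneSpectrum (𝓞 N), (p : 𝓞 N) ∈ U.asIdeal →
      (p : 𝓞 L) ∈ (U.under (𝓞 L)).asIdeal := fun U hU => by simpa using hU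
  have hpV : (p : 𝓞 N) ∈ V.asIdeal := by simpa [hVW] using hW
  have hunder : (V.under (𝓞 L)).asIdeal.comap (algebraMap (𝓞 K) (𝓞 L)) =
      (W.under (𝓞 L)).asIdeal.comap (algebraMap (𝓞 K) (𝓞 L)) := by
    ext c
    simp [hVW, hσ]
  have hx0 : algebraMap (𝓞 L) (𝓞 N) π ≠ 0 := by simpa using hπ0
  have hval : normVal W p (σ (algebraMap (𝓞 L) (𝓞 N) π)) =
      normVal W p (algebraMap (𝓞 L) (𝓞 N) π) := calc
    _ = normVal V p (algebraMap (𝓞 L) (𝓞 N) π) := by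
      rw [← normVal_equivOfRingEquiv σ V hp hx0, hWV]
    _ = normVal (V.under (𝓞 L)) p π := normVal_algebraMap _ V hp hπ0
    _ = normVal (W.under (𝓞 L)) p π := hπ _ _ (hp_under V hpV) (hp_under W hW) hunder
    _ = _ := (normVal_algebraMap (W.under (𝓞 L)) W hp hπ0).symm
  rw [intValuation_eq_exp_neg_padicOrd _ (by simpa using hx0),
    intValuation_eq_exp_neg_padicOrd _ hx0, padicOrd_eq_of_normVal_eq hp hW hval]

theorem associated_conj (hπ : IsPotentiallyIn K p π) (hp : p ≠ 0) (hπ0 : π ≠ 0)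
    (hσ : ∀ c : 𝓞 K, σ (algebraMap (𝓞 L) (𝓞 N) (algebraMap (𝓞 K) (𝓞 L) c)) =
      algebraMap (𝓞 L) (𝓞 N) (algebraMap (𝓞 K) (𝓞 L) c))
    {m : ℕ} (hdvd : algebraMap (𝓞 L) (𝓞 N) π ∣ (p : 𝓞 N) ^ m) :
    Associated (σ (algebraMap (𝓞 L) (𝓞 N) π)) (algebraMap (𝓞 L) (𝓞 N) π) := by
  have hx0 : algebraMap (𝓞 L) (𝓞 N) π ≠ 0 := by simpa using hπ0
  refine associated_of_forall_intValuation_eq (by simpa using hx0) hx0 fun W => ?_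
  by_cases hW : (p : 𝓞 N) ∈ W.asIdeal
  · exact hπ.intValuation_conj_eq hp hπ0 hσ hW
  have not_mem : ∀ y : 𝓞 N, y ∣ (p : 𝓞 N) ^ m → y ∉ W.asIdeal :=
    fun y hy hyW => hW (W.isPrime.mem_of_pow_mem m (W.asIdeal.mem_of_dvd hy hyW))
  have hσdvd : σ (algebraMap (𝓞 L) (𝓞 N) π) ∣ (p : 𝓞 N) ^ m := by
    simpa using map_dvd σ hdvd
  rw [(W.intValuation_eq_one_iff_mem_primeCompl _).2 (not_mem _ hσdvd),
    (W.intValuation_eq_one_iff_mem_primeCompl _).2 (not_mem _ hdvd)]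

end IsPotentiallyIn

theorem stmt2_general (p n q : ℕ) (hp : p.Prime) (hq : q = p ^ n)
    (K L : Type*) [Field K] [NumberField K] [Field L] [NumberField L] [Algebra K L]
    (Lt : Type*) [Field Lt] [NumberField Lt] [Algebra L Lt]
    [IsGalois ℚ Lt]
    (π : 𝓞 L)
    (habs : ∀ σ : L →+* ℂ, ‖σ (π : L)‖ = Real.sqrt q)
    (hpot : ∀ w₁ w₂ : HeightOneSpectrum (𝓞 L),
      (p : 𝓞 L) ∈ w₁.asIdeal → (p : 𝓞 L) ∈ w₂.asIdeal →
      w₁.asIdeal.comap (algebraMap (𝓞 K) (𝓞 L)) =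
        w₂.asIdeal.comap (algebraMap (𝓞 K) (𝓞 L)) →
      normVal w₁ p π = normVal w₂ p π) :
    (π : L) ^ (NumberField.Units.torsionOrder Lt : ℕ) ∈ (algebraMap K L).range := by
  rcases eq_or_ne π 0 with rfl | hπ0
  · exact ⟨0, by simp [Units.torsionOrder_ne_zero]⟩
  let _ : Algebra K Lt := ((algebraMap L Lt).comp (algebraMap K L)).toAlgebra
  have : IsScalarTower K L Lt := .of_algebraMap_eq' rfl
  have : IsGalois K Lt := .tower_top_of_isGalois ℚ K Lt
  have : FiniteDimensional K Lt := .of_restrictScalars_finite ℚ K Lt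
  set x := algebraMap (𝓞 L) (𝓞 Lt) π
  have hx : ∀ φ : Lt →+* ℂ, ‖φ x‖ = √q := fun φ => habs (φ.comp (algebraMap L Lt))
  have hdvd : x ∣ (p : 𝓞 Lt) ^ (n * Module.finrank ℚ Lt) := by
    simpa [hq, pow_mul] using RingOfIntegers.dvd_pow_finrank_of_forall_norm_eq_sqrt_s2 hx
  refine mem_range_algebraMap_of_forall_algEquiv_apply_eq (E := Lt) fun σ => ?_
  set σ₀ := RingOfIntegers.mapRingEquiv σ.toRingEquiv
  have hσ₀ : Associated (σ₀ x) x := IsPotentiallyIn.associated_conj hpot hp.ne_zero hπ0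
    (fun c => RingOfIntegers.ext (σ.commutes (c : K))) hdvd
  have := Units.pow_torsionOrder_eq_of_associated hσ₀ (by simpa [σ₀, x] using hπ0)
    fun φ => by rw [hx]; exact (hx (φ.comp σ.toRingHom)).symm
  have := congrArg (algebraMap (𝓞 Lt) Lt) this
  rw [map_pow, map_pow] at this
  rwa [map_pow, map_pow]

/-- Let `L/K` be an extension of number fields and `π ∈ L` a Weil
`q`-number (`q` a power of a prime `p`). Assume `π` is `p`-potentially in `K`, i.e. for
every `p`-adic valuation `v` of `K` and any two extensions `w₁, w₂` of `v` to `L` one has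
`w₁(π) = w₂(π)`. Then `π ^ k ∈ K`, where `k` is the order of the group of roots of unity
in a Galois closure of `L`. -/
theorem stmt2 (p n q : ℕ) (hp : p.Prime) (hn : 0 < n) (hq : q = p ^ n)
    (K L : Type*) [Field K] [NumberField K] [Field L] [NumberField L] [Algebra K L]
    (Lt : Type*) [Field Lt] [NumberField Lt] [Algebra L Lt] [IsScalarTower ℚ L Lt]
    [IsGalois ℚ Lt] (hLt : IntermediateField.normalClosure ℚ L Lt = ⊤)
    (π : 𝓞 L)
    (habs : ∀ σ : L →+* ℂ, ‖σ (π : L)‖ = Real.sqrt q)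
    (hpot : ∀ w₁ w₂ : HeightOneSpectrum (𝓞 L),
      (p : 𝓞 L) ∈ w₁.asIdeal → (p : 𝓞 L) ∈ w₂.asIdeal →
      w₁.asIdeal.comap (algebraMap (𝓞 K) (𝓞 L)) =
        w₂.asIdeal.comap (algebraMap (𝓞 K) (𝓞 L)) →
      normVal w₁ p π = normVal w₂ p π) :
    (π : L) ^ (NumberField.Units.torsionOrder Lt : ℕ) ∈ (algebraMap K L).range :=
  stmt2_general p n q hp hq K L Lt π habs hpot
end

section
/- Let L/K be an extension of number fields such that every p-adic valuation of K has a unique extension to L. Then for every Weil q-number π ∈ L (q a power of p), there exists a positive integer k with π^k ∈ K. -/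
/-!
Let `M` be a Galois closure of `L/K` and `σ ∈ Gal(M/K)`. Then `π ∣ σ π` in `𝓞 M`: if a prime `P`
of `M` divides `π`, then `Q = P ∩ L` lies above `p` (as `π ∣ q ^ [L : ℚ]`), so it is the only
prime of `L` over `Q ∩ K`. Hence `σ⁻¹ P` lies over `Q` as well, with the same ramification index
over `Q` (both have the same one over `Q ∩ K`), and `π` has the same multiplicity at `P` and at
`σ⁻¹ P`. Thus `σ π = u π`, where every conjugate of the algebraic integer `u` has absolute value
`1`; by Kronecker `u` is a root of unity, and a common power `π ^ k` is fixed by `Gal(M/K)`, i.e.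
lies in `K`.
-/

open NumberField IsDedekindDomain

namespace Ideal

theorem ne_bot_of_natCast_mem {R : Type*} [CommRing R] [CharZero R] {I : Ideal R}
    {p : ℕ} (hp : p ≠ 0) (h : (p : R) ∈ I) : I ≠ ⊥ :=
  (Submodule.ne_bot_iff I).mpr ⟨_, h, Nat.cast_ne_zero.mpr hp⟩

variable {A B C : Type*} [CommRing A] [IsDomain A] [CommRing B] [IsDedekindDomain B]
  [CommRing C] [IsDedekindDomain C] [Algebra A B] [Algebra B C] [Algebra A C]
  [IsScalarTower A B C] [Module.IsTorsionFree A B] [Module.IsTorsionFree B C]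
  [Algebra.IsIntegral A B]

theorem ramificationIdx'_comap_algEquiv {Q : Ideal B} (hQ : Q ≠ ⊥) (e : C ≃ₐ[A] C)
    (P : Ideal C) [P.IsPrime] [P.LiesOver Q] [(P.comap e).LiesOver Q] :
    Q.ramificationIdx' (P.comap e) = Q.ramificationIdx' P := by
  have : Q.IsPrime := isPrime_of_liesOver P Q
  have he : (Q.under A).ramificationIdx' Q ≠ 0 :=
    IsDedekindDomain.ramificationIdx'_ne_zero_of_liesOver Q (under_ne_bot A hQ)
  refine Nat.eq_of_mul_eq_mul_left (Nat.pos_of_ne_zero he) ?_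
  rw [← ramificationIdx'_algebra_tower' _ Q P, ← ramificationIdx'_algebra_tower' _ Q,
    ramificationIdx'_comap_eq]

theorem emultiplicity_map_le_emultiplicity_comap_algEquiv {I : Ideal B} (hI : I ≠ ⊥)
    (huniq : ∀ Q Q' : Ideal B, Q.IsPrime → Q'.IsPrime → I ≤ Q → Q'.under A = Q.under A → Q' = Q)
    (e : C ≃ₐ[A] C) (P : Ideal C) [P.IsPrime] (hP : P ≠ ⊥) :
    emultiplicity P (I.map (algebraMap B C)) ≤
      emultiplicity (P.comap e) (I.map (algebraMap B C)) := by
  by_cases hIP : I ≤ P.under B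
  swap
  · rw [emultiplicity_eq_zero.mpr (by rwa [dvd_iff_le, map_le_iff_le_comap])]
    exact zero_le
  set Q := P.under B
  have hQ : Q ≠ ⊥ := ne_bot_of_le_ne_bot hI hIP
  have hQ' : (P.comap e).under B = Q :=
    huniq _ _ inferInstance inferInstance hIP <| by
      rw [under_under, under_under]; exact (over_def (P.comap e) (P.under A)).symm
  have : (P.comap e).LiesOver Q := ⟨hQ'.symm⟩
  have hQirr : Irreducible Q := (prime_of_isPrime hQ inferInstance).irreducible
  have hP' : P.comap e ≠ ⊥ := ne_bot_of_liesOver_of_ne_bot hQ _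
  rw [IsDedekindDomain.emultiplicity_map_eq_ramificationIdx'_mul hI hQirr
      (prime_of_isPrime hP inferInstance).irreducible hP,
    IsDedekindDomain.emultiplicity_map_eq_ramificationIdx'_mul hI hQirr
      (prime_of_isPrime hP' inferInstance).irreducible hP',
    ramificationIdx'_comap_algEquiv hQ]

theorem map_algEquiv_map_le {I : Ideal B} (hI : I ≠ ⊥)
    (huniq : ∀ Q Q' : Ideal B, Q.IsPrime → Q'.IsPrime → I ≤ Q → Q'.under A = Q.under A → Q' = Q)
    (e : C ≃ₐ[A] C) :
    (I.map (algebraMap B C)).map e ≤ I.map (algebraMap B C) := by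
  rw [← dvd_iff_le, UniqueFactorizationMonoid.dvd_iff_emultiplicity_le (map_ne_bot_of_ne_bot hI)]
  intro P hP
  have := isPrime_of_prime hP
  calc emultiplicity P (I.map (algebraMap B C))
      ≤ emultiplicity (P.comap e) (I.map (algebraMap B C)) :=
        emultiplicity_map_le_emultiplicity_comap_algEquiv hI huniq e P hP.ne_zero
    _ ≤ emultiplicity ((P.comap e).map e) ((I.map (algebraMap B C)).map e) :=
        le_emultiplicity_map (mapHom e)
    _ = emultiplicity P ((I.map (algebraMap B C)).map e) := by
        rw [map_comap_of_surjective _ e.surjective]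

end Ideal

theorem IsGalois.exists_pow_mem_bot_of_forall_pow_eq_pow {K M : Type*} [Field K] [Field M]
    [Algebra K M] [FiniteDimensional K M] [IsGalois K M] {x : M}
    (h : ∀ σ : M ≃ₐ[K] M, ∃ m, 0 < m ∧ σ x ^ m = x ^ m) :
    ∃ N, 0 < N ∧ x ^ N ∈ (⊥ : IntermediateField K M) := by
  choose m hm hpow using h
  refine ⟨∏ σ, m σ, Finset.prod_pos fun σ _ ↦ hm σ, (IsGalois.mem_bot_iff_fixed _).mpr fun σ ↦ ?_⟩
  obtain ⟨t, ht⟩ := Finset.dvd_prod_of_mem m (Finset.mem_univ σ)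
  rw [map_pow, ht, pow_mul, pow_mul, hpow]

namespace NumberField.RingOfIntegers

theorem exists_pow_eq_pow_of_dvd {M : Type*} [Field M] [NumberField M] {x y : 𝓞 M} (hx : x ≠ 0)
    (hxy : x ∣ y) (hnorm : ∀ φ : M →+* ℂ, ‖φ y‖ = ‖φ x‖) : ∃ m, 0 < m ∧ y ^ m = x ^ m := by
  obtain ⟨u, rfl⟩ := hxy
  have hu : ∀ φ : M →+* ℂ, ‖φ u‖ = 1 := by
    intro φ
    have hφx : ‖φ x‖ ≠ 0 := by simpa using hx
    simpa [hφx] using hnorm φ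
  obtain ⟨m, hm, hum⟩ := Embeddings.pow_eq_one_of_norm_eq_one M ℂ (isIntegral_coe u) hu
  refine ⟨m, hm, ?_⟩
  rw [mul_pow, show u ^ m = 1 from coe_injective (by simpa using hum), mul_one]

theorem dvd_natCast_pow_finrank {L : Type*} [Field L] [NumberField L] {x : 𝓞 L} {q : ℕ}
    (hx : ∀ φ : L →+* ℂ, ‖φ x‖ = √q) : x ∣ (q : 𝓞 L) ^ Module.finrank ℚ L := by
  set N := (Algebra.norm ℤ x).natAbs
  have hN : (N : ℝ) = √q ^ Module.finrank ℚ L := by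
    have := InfinitePlace.prod_eq_abs_norm (x : L)
    simp only [← InfinitePlace.norm_embedding_eq, hx, Finset.prod_pow_eq_pow_sum,
      InfinitePlace.sum_mult_eq] at this
    rw [this, ← Algebra.coe_norm_int, Nat.cast_natAbs, Rat.cast_abs, Rat.cast_intCast,
      Int.cast_abs]
  have hN2 : N ^ 2 = q ^ Module.finrank ℚ L := by
    have : (N : ℝ) ^ 2 = (q : ℝ) ^ Module.finrank ℚ L := by
      rw [hN, ← pow_mul, mul_comm, pow_mul, Real.sq_sqrt q.cast_nonneg]
    exact_mod_cast this
  have hxN : x ∣ (N : 𝓞 L) := by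
    simpa [N, Ideal.mem_span_singleton] using Ideal.absNorm_mem (Ideal.span {x})
  calc x ∣ (N : 𝓞 L) ^ 2 := hxN.trans (dvd_pow_self _ two_ne_zero)
    _ = (q : 𝓞 L) ^ Module.finrank ℚ L := by rw [← Nat.cast_pow, hN2, Nat.cast_pow]

end NumberField.RingOfIntegers

namespace NumberField

theorem exists_pow_mem_range_of_isGalois (K L M : Type*) [Field K] [NumberField K] [Field L]
    [NumberField L] [Field M] [NumberField M] [Algebra K L] [Algebra K M] [Algebra L M]
    [IsScalarTower K L M] [IsGalois K M] {x : 𝓞 L} {r : ℝ} (hx : ∀ φ : L →+* ℂ, ‖φ x‖ = r)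
    (huniq : ∀ Q Q' : Ideal (𝓞 L), Q.IsPrime → Q'.IsPrime → x ∈ Q →
      Q'.under (𝓞 K) = Q.under (𝓞 K) → Q' = Q) :
    ∃ k, 0 < k ∧ (x : L) ^ k ∈ (algebraMap K L).range := by
  rcases eq_or_ne x 0 with rfl | hx0
  · exact ⟨1, one_pos, 0, by simp⟩
  set y : 𝓞 M := algebraMap (𝓞 L) (𝓞 M) x
  have hy0 : y ≠ 0 := by simpa [y] using hx0
  have hdvd (σ : M ≃ₐ[K] M) : y ∣ RingOfIntegers.mapAlgEquiv σ y := by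
    rw [← Ideal.span_singleton_le_span_singleton]
    simpa [y, Ideal.map_span] using Ideal.map_algEquiv_map_le (I := Ideal.span {x})
      (by simpa using hx0) (fun Q Q' _ _ hxQ ↦ huniq Q Q' ‹_› ‹_› (by simpa using hxQ))
      (RingOfIntegers.mapAlgEquiv σ)
  have hpow (σ : M ≃ₐ[K] M) : ∃ m, 0 < m ∧ σ (y : M) ^ m = (y : M) ^ m := by
    obtain ⟨m, hm, h⟩ := RingOfIntegers.exists_pow_eq_pow_of_dvd hy0 (hdvd σ) fun φ ↦
      (hx ((φ.comp σ.toRingHom).comp (algebraMap L M))).trans (hx (φ.comp (algebraMap L M))).symm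
    have h' := congrArg (algebraMap (𝓞 M) M) h
    rw [map_pow, map_pow] at h'
    exact ⟨m, hm, h'⟩
  obtain ⟨N, hN, z, hz⟩ := IsGalois.exists_pow_mem_bot_of_forall_pow_eq_pow hpow
  refine ⟨N, hN, z, (algebraMap L M).injective ?_⟩
  rw [map_pow, ← IsScalarTower.algebraMap_apply]
  exact hz

theorem exists_pow_mem_range_of_forall_norm_eq (K L : Type*) [Field K] [NumberField K] [Field L]
    [NumberField L] [Algebra K L] {x : 𝓞 L} {r : ℝ} (hx : ∀ φ : L →+* ℂ, ‖φ x‖ = r)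
    (huniq : ∀ Q Q' : Ideal (𝓞 L), Q.IsPrime → Q'.IsPrime → x ∈ Q →
      Q'.under (𝓞 K) = Q.under (𝓞 K) → Q' = Q) :
    ∃ k, 0 < k ∧ (x : L) ^ k ∈ (algebraMap K L).range := by
  let M := IntermediateField.normalClosure K L (AlgebraicClosure L)
  have : NumberField M := .of_module_finite K M
  exact exists_pow_mem_range_of_isGalois K L M hx huniq

theorem eq_of_under_eq_of_natCast_mem {K L : Type*} [Field K] [NumberField K] [Field L]
    [NumberField L] [Algebra K L] {p : ℕ} (hp : p ≠ 0)
    (huniq : ∀ v : HeightOneSpectrum (𝓞 K), (p : 𝓞 K) ∈ v.asIdeal →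
      ∃! w : HeightOneSpectrum (𝓞 L), w.asIdeal.comap (algebraMap (𝓞 K) (𝓞 L)) = v.asIdeal)
    {Q Q' : Ideal (𝓞 L)} [Q.IsPrime] [Q'.IsPrime] (hpQ : (p : 𝓞 L) ∈ Q)
    (hQQ' : Q'.under (𝓞 K) = Q.under (𝓞 K)) : Q' = Q := by
  have hp𝔭 : (p : 𝓞 K) ∈ Q.under (𝓞 K) := by simpa [Ideal.under_def] using hpQ
  have hpQ' : (p : 𝓞 L) ∈ Q' := by
    simpa [Ideal.under_def] using (hQQ' ▸ hp𝔭 : (p : 𝓞 K) ∈ Q'.under (𝓞 K))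
  obtain ⟨w, -, hw⟩ :=
    huniq ⟨Q.under (𝓞 K), inferInstance, Ideal.ne_bot_of_natCast_mem hp hp𝔭⟩ hp𝔭
  have hQ' := hw ⟨Q', inferInstance, Ideal.ne_bot_of_natCast_mem hp hpQ'⟩ hQQ'
  have hQ := hw ⟨Q, inferInstance, Ideal.ne_bot_of_natCast_mem hp hpQ⟩ rfl
  exact congrArg HeightOneSpectrum.asIdeal (hQ'.trans hQ.symm)

end NumberField

theorem stmt3_general (p n q : ℕ) (hp : p.Prime) (hq : q = p ^ n)
    (K L : Type*) [Field K] [NumberField K] [Field L] [NumberField L] [Algebra K L]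
    (huniq : ∀ v : HeightOneSpectrum (𝓞 K), (p : 𝓞 K) ∈ v.asIdeal →
      ∃! w : HeightOneSpectrum (𝓞 L),
        w.asIdeal.comap (algebraMap (𝓞 K) (𝓞 L)) = v.asIdeal)
    (π : 𝓞 L)
    (habs : ∀ σ : L →+* ℂ, ‖σ (π : L)‖ = Real.sqrt q) :
    ∃ k : ℕ, 0 < k ∧ (π : L) ^ k ∈ (algebraMap K L).range := by
  have hdvd := RingOfIntegers.dvd_natCast_pow_finrank habs
  rw [hq, Nat.cast_pow, ← pow_mul] at hdvd
  refine exists_pow_mem_range_of_forall_norm_eq K L habs fun Q Q' _ _ hπQ hQQ' ↦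
    eq_of_under_eq_of_natCast_mem hp.ne_zero huniq ?_ hQQ'
  exact ‹Q.IsPrime›.mem_of_pow_mem _ (Ideal.mem_of_dvd _ hdvd hπQ)

/-- Let `L/K` be an extension of number fields such that every `p`-adic
valuation of `K` has a unique extension to `L`. Then for every Weil `q`-number `π ∈ L`
(`q` a power of `p`), there exists a positive integer `k` with `π ^ k ∈ K`. -/
theorem stmt3 (p n q : ℕ) (hp : p.Prime) (hn : 0 < n) (hq : q = p ^ n)
    (K L : Type*) [Field K] [NumberField K] [Field L] [NumberField L] [Algebra K L]
    (huniq : ∀ v : HeightOneSpectrum (𝓞 K), (p : 𝓞 K) ∈ v.asIdeal →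
      ∃! w : HeightOneSpectrum (𝓞 L),
        w.asIdeal.comap (algebraMap (𝓞 K) (𝓞 L)) = v.asIdeal)
    (π : 𝓞 L)
    (habs : ∀ σ : L →+* ℂ, ‖σ (π : L)‖ = Real.sqrt q) :
    ∃ k : ℕ, 0 < k ∧ (π : L) ^ k ∈ (algebraMap K L).range :=
  stmt3_general p n q hp hq K L huniq π habs
end

section
/- Let L be a number field with Galois closure L̃ and Galois group G = Gal(L̃/ℚ). Let π ∈ L be a Weil q-number, k the order of the group of roots of unity of L̃, and F = ℚ(π^k). Then the stabilizer in G of the vector of p-adic valuations (v(π))_{v | p, v valuation of L̃} equals the subgroup Gal(L̃/F) fixing F pointwise. -/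
open NumberField IsDedekindDomain

/-!
Let `y` be the image of `π` in `𝓞 L̃` and `x = σ⁻¹ y`. All archimedean absolute values of
`x` and `y` equal `√q`, so their norms are `±q^{[L̃:ℚ]/2}` and both divide a power of `p`:
their valuations vanish away from `p`, and equality of the valuations above `p` amounts to
`(x) = (y)`. Then `x / y` is a unit all of whose absolute values are `1`, i.e. a root of
unity, so `x ^ k = y ^ k`; conversely `x ^ k = y ^ k` forces equal valuations. Finally
`x ^ k = y ^ k` says that `σ` fixes `π ^ k`, i.e. fixes `ℚ(π ^ k)` pointwise.
-/

lemma associates_mk_span_singleton_ne_zero {R : Type*} [CommRing R] {x : R} (hx : x ≠ 0) :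
    Associates.mk (Ideal.span {x}) ≠ 0 := by
  rwa [Associates.mk_ne_zero, Ne, Submodule.zero_eq_bot, Ideal.span_singleton_eq_bot]

section padicOrd

variable {K : Type*} [Field K] [NumberField K]

lemma padicOrd_pow (w : HeightOneSpectrum (𝓞 K)) {x : 𝓞 K} (hx : x ≠ 0) (k : ℕ) :
    padicOrd w (x ^ k) = k * padicOrd w x := by
  classical
  rw [padicOrd, padicOrd, ← Ideal.span_singleton_pow, Associates.mk_pow]
  exact Associates.count_pow (associates_mk_span_singleton_ne_zero hx)
    w.associates_irreducible k

lemma padicOrd_ne_zero_iff (w : HeightOneSpectrum (𝓞 K)) {x : 𝓞 K} (hx : x ≠ 0) :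
    padicOrd w x ≠ 0 ↔ x ∈ w.asIdeal := by
  classical
  rw [padicOrd, Associates.count_ne_zero_iff_dvd
    (by rwa [Ne, Submodule.zero_eq_bot, Ideal.span_singleton_eq_bot]) w.irreducible,
    Ideal.dvd_span_singleton]

lemma padicOrd_eq_zero_of_dvd_pow (w : HeightOneSpectrum (𝓞 K)) {x a : 𝓞 K} {m : ℕ}
    (hx : x ∣ a ^ m) (ha : a ∉ w.asIdeal) : padicOrd w x = 0 := by
  have ha0 : a ≠ 0 := by
    rintro rfl
    exact ha w.asIdeal.zero_mem
  have hx0 : x ≠ 0 := ne_zero_of_dvd_ne_zero (pow_ne_zero m ha0) hx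
  rw [← not_ne_iff, padicOrd_ne_zero_iff w hx0]
  exact fun hxw ↦ ha (w.isPrime.mem_of_pow_mem m (w.asIdeal.mem_of_dvd hx hxw))

lemma span_singleton_eq_of_padicOrd_eq {x y : 𝓞 K} (hx : x ≠ 0) (hy : y ≠ 0)
    (h : ∀ w : HeightOneSpectrum (𝓞 K), padicOrd w x = padicOrd w y) :
    Ideal.span ({x} : Set (𝓞 K)) = Ideal.span {y} := by
  classical
  rw [← associated_iff_eq, ← Associates.mk_eq_mk_iff_associated]
  refine Associates.eq_of_eq_counts (associates_mk_span_singleton_ne_zero hx)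
    (associates_mk_span_singleton_ne_zero hy) fun P hP ↦ ?_
  obtain ⟨J, rfl⟩ := Associates.mk_surjective P
  have hJ : Prime J :=
    UniqueFactorizationMonoid.irreducible_iff_prime.mp (Associates.irreducible_mk.mp hP)
  exact h ⟨J, Ideal.isPrime_of_prime hJ, hJ.ne_zero⟩

lemma forall_normVal_eq_iff_forall_padicOrd_eq {p m : ℕ} (hp : (p : 𝓞 K) ≠ 0) {x y : 𝓞 K}
    (hx : x ∣ (p : 𝓞 K) ^ m) (hy : y ∣ (p : 𝓞 K) ^ m) :
    (∀ w : HeightOneSpectrum (𝓞 K), (p : 𝓞 K) ∈ w.asIdeal →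
        normVal w p x = normVal w p y) ↔
      ∀ w : HeightOneSpectrum (𝓞 K), padicOrd w x = padicOrd w y := by
  refine ⟨fun h w ↦ ?_, fun h w _ ↦ by rw [normVal, normVal, h w]⟩
  by_cases hpw : (p : 𝓞 K) ∈ w.asIdeal
  · have hw : (padicOrd w (p : 𝓞 K) : ℚ) ≠ 0 :=
      Nat.cast_ne_zero.mpr ((padicOrd_ne_zero_iff w hp).mpr hpw)
    exact_mod_cast (div_left_inj' hw).mp (h w hpw)
  · rw [padicOrd_eq_zero_of_dvd_pow w hx hpw, padicOrd_eq_zero_of_dvd_pow w hy hpw]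

end padicOrd

section WeilNumber

variable {K : Type*} [Field K] [NumberField K]

open NumberField.Units in
lemma pow_torsionOrder_eq_of_associated {x y : 𝓞 K} (hxy : Associated x y) (hx : x ≠ 0)
    (hnorm : ∀ φ : K →+* ℂ, ‖φ x‖ = ‖φ y‖) :
    x ^ torsionOrder K = y ^ torsionOrder K := by
  obtain ⟨u, rfl⟩ := hxy
  have hu : u ∈ rootsOfUnity (torsionOrder K) (𝓞 K) := by
    rw [rootsOfUnity_eq_torsion, mem_torsion]
    intro w
    have hw := hnorm w.embedding
    push_cast at hw
    rw [map_mul, norm_mul, eq_comm, mul_eq_left₀ (by simpa using hx),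
      w.norm_embedding_eq] at hw
    exact hw
  have hu1 : (u : 𝓞 K) ^ torsionOrder K = 1 := congrArg Units.val ((mem_rootsOfUnity _ _).mp hu)
  rw [mul_pow, hu1, mul_one]

lemma norm_sq_eq_of_norm_embedding_eq_sqrt {x : K} {q : ℕ}
    (h : ∀ φ : K →+* ℂ, ‖φ x‖ = √q) :
    Algebra.norm ℚ x ^ 2 = (q : ℚ) ^ Module.finrank ℚ K := by
  have hnorm : ‖algebraMap ℚ ℂ (Algebra.norm ℚ x)‖ = √q ^ Module.finrank ℚ K := by
    rw [Algebra.norm_eq_prod_embeddings, norm_prod,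
      Finset.prod_congr rfl fun φ _ ↦ h φ.toRingHom, Finset.prod_const, Finset.card_univ,
      ← Fintype.card_congr (RingHom.equivRatAlgHom K ℂ), Embeddings.card]
  rw [eq_ratCast, Complex.norm_ratCast, ← sq_eq_sq₀ (abs_nonneg _) (by positivity), sq_abs,
    ← pow_mul, mul_comm, pow_mul, Real.sq_sqrt q.cast_nonneg] at hnorm
  exact_mod_cast hnorm

lemma dvd_natCast_pow_finrank_of_norm_embedding_eq_sqrt [IsGalois ℚ K] {x : 𝓞 K} {q : ℕ}
    (h : ∀ φ : K →+* ℂ, ‖φ x‖ = √q) :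
    x ∣ (q : 𝓞 K) ^ Module.finrank ℚ K := by
  have hN : (RingOfIntegers.norm ℚ x) ^ 2 = (q : 𝓞 ℚ) ^ Module.finrank ℚ K :=
    RingOfIntegers.ext (by push_cast; exact norm_sq_eq_of_norm_embedding_eq_sqrt h)
  have hdvd := (RingOfIntegers.dvd_norm ℚ x).trans
    (map_dvd (algebraMap (𝓞 ℚ) (𝓞 K)) (dvd_pow_self _ two_ne_zero))
  rwa [hN, map_pow, map_natCast] at hdvd

open NumberField.Units in
lemma forall_padicOrd_eq_iff_pow_torsionOrder_eq {x y : 𝓞 K} (hx : x ≠ 0) (hy : y ≠ 0)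
    (hnorm : ∀ φ : K →+* ℂ, ‖φ x‖ = ‖φ y‖) :
    (∀ w : HeightOneSpectrum (𝓞 K), padicOrd w x = padicOrd w y) ↔
      x ^ torsionOrder K = y ^ torsionOrder K := by
  refine ⟨fun h ↦ pow_torsionOrder_eq_of_associated ?_ hx hnorm, fun h w ↦ ?_⟩
  · exact Ideal.span_singleton_eq_span_singleton.mp (span_singleton_eq_of_padicOrd_eq hx hy h)
  · have hk := padicOrd_pow w hx (torsionOrder K)
    rw [h, padicOrd_pow w hy] at hk
    exact (Nat.eq_of_mul_eq_mul_left (torsionOrder_pos K) hk).symm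

end WeilNumber

lemma mem_fixingSubgroup_adjoin_singleton_iff {F E : Type*} [Field F] [Field E] [Algebra F E]
    (σ : E ≃ₐ[F] E) (x : E) :
    σ ∈ (IntermediateField.adjoin F {x}).fixingSubgroup ↔ σ x = x := by
  simpa [AlgEquiv.smul_def] using
    IntermediateField.forall_mem_adjoin_smul_eq_self_iff F σ (S := {x})

theorem stmt4_general (p n q : ℕ) (hp : p.Prime) (hq : q = p ^ n)
    (L Lt : Type*) [Field L] [NumberField L] [Field Lt] [NumberField Lt]
    [Algebra L Lt] [IsGalois ℚ Lt]
    (π : 𝓞 L)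
    (habs : ∀ σ : L →+* ℂ, ‖σ (π : L)‖ = Real.sqrt q) :
    ∀ σ : Lt ≃ₐ[ℚ] Lt,
      (∀ w : HeightOneSpectrum (𝓞 Lt), (p : 𝓞 Lt) ∈ w.asIdeal →
        normVal w p (RingOfIntegers.mapRingHom σ.symm
          (algebraMap (𝓞 L) (𝓞 Lt) π)) =
        normVal w p (algebraMap (𝓞 L) (𝓞 Lt) π)) ↔
      σ ∈ (IntermediateField.adjoin ℚ
        ({(algebraMap L Lt (π : L)) ^ (NumberField.Units.torsionOrder Lt : ℕ)} :
          Set Lt)).fixingSubgroup := by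
  intro σ
  set y := algebraMap (𝓞 L) (𝓞 Lt) π
  set x := RingOfIntegers.mapRingHom (σ.symm : Lt →+* Lt) y
  have hy : ∀ φ : Lt →+* ℂ, ‖φ y‖ = √q := fun φ ↦ habs (φ.comp (algebraMap L Lt))
  have hx : ∀ φ : Lt →+* ℂ, ‖φ x‖ = √q :=
    fun φ ↦ hy (φ.comp (σ.symm : Lt →+* Lt))
  have hp0 : (p : 𝓞 Lt) ≠ 0 := Nat.cast_ne_zero.mpr hp.ne_zero
  have hdvd {z : 𝓞 Lt} (hz : ∀ φ : Lt →+* ℂ, ‖φ z‖ = √q) :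
      z ∣ (p : 𝓞 Lt) ^ (n * Module.finrank ℚ Lt) := by
    simpa [hq, pow_mul] using dvd_natCast_pow_finrank_of_norm_embedding_eq_sqrt hz
  rw [forall_normVal_eq_iff_forall_padicOrd_eq hp0 (hdvd hx) (hdvd hy),
    forall_padicOrd_eq_iff_pow_torsionOrder_eq
      (ne_zero_of_dvd_ne_zero (pow_ne_zero _ hp0) (hdvd hx))
      (ne_zero_of_dvd_ne_zero (pow_ne_zero _ hp0) (hdvd hy)) fun φ ↦ (hx φ).trans (hy φ).symm,
    mem_fixingSubgroup_adjoin_singleton_iff, RingOfIntegers.ext_iff]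
  change σ.symm (y : Lt) ^ _ = (y : Lt) ^ _ ↔ σ ((y : Lt) ^ _) = (y : Lt) ^ _
  rw [← map_pow, AlgEquiv.symm_apply_eq, eq_comm]

/-- Let `L` be a number field with Galois closure `L̃` and Galois group
`G = Gal(L̃/ℚ)`. Let `π ∈ L` be a Weil `q`-number, `k` the order of the group of roots of
unity of `L̃`, and `F = ℚ(π^k)`. Then the stabilizer in `G` of the vector of `p`-adic
valuations `(v(π))_{v ∣ p}` (for the action `(σ·v)(x) = v(σ⁻¹ x)`, valuations normalized
by `v(p) = 1`) equals the subgroup `Gal(L̃/F)` fixing `F` pointwise. -/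
theorem stmt4 (p n q : ℕ) (hp : p.Prime) (hn : 0 < n) (hq : q = p ^ n)
    (L Lt : Type*) [Field L] [NumberField L] [Field Lt] [NumberField Lt]
    [Algebra L Lt] [IsScalarTower ℚ L Lt] [IsGalois ℚ Lt]
    (hLt : IntermediateField.normalClosure ℚ L Lt = ⊤)
    (π : 𝓞 L)
    (habs : ∀ σ : L →+* ℂ, ‖σ (π : L)‖ = Real.sqrt q) :
    ∀ σ : Lt ≃ₐ[ℚ] Lt,
      (∀ w : HeightOneSpectrum (𝓞 Lt), (p : 𝓞 Lt) ∈ w.asIdeal →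
        normVal w p (RingOfIntegers.mapRingHom σ.symm
          (algebraMap (𝓞 L) (𝓞 Lt) π)) =
        normVal w p (algebraMap (𝓞 L) (𝓞 Lt) π)) ↔
      σ ∈ (IntermediateField.adjoin ℚ
        ({(algebraMap L Lt (π : L)) ^ (NumberField.Units.torsionOrder Lt : ℕ)} :
          Set Lt)).fixingSubgroup :=
  stmt4_general p n q hp hq L Lt π habs
end

section
/- Let g ≥ 4. Every subgroup H of ℤ/2ℤ × S_g that contains {0} × S_{g-1} and contains neither {0} × S_g nor ℤ/2ℤ × {1} as a subgroup (i.e., H does not contain (1, id) and does not contain all of {0} × S_g) must equal {0} × S_{g-1}. -/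
/-!
The subgroup `L = {σ | (1, σ) ∈ H}` contains the point stabilizer `S_{g-1}`, which is a maximal
subgroup of `S_g` (the natural action is primitive), and `L ≠ S_g`; hence `L = S_{g-1}`.
The `S_g`-component of every element of `H` normalizes `L`, and a point stabilizer is
self-normalizing as soon as there are three points, so every `(t, σ) ∈ H` has `σ ∈ S_{g-1}`.
Then `(t, 1) = (t, σ) (1, σ)⁻¹ ∈ H`, which forces `t = 1`.
-/

open MulAction

theorem Subgroup.map_snd_le_normalizer_comap_inr {C P : Type*} [Group C] [Group P]
    (H : Subgroup (C × P)) :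
    H.map (MonoidHom.snd C P) ≤ Subgroup.normalizer (H.comap (MonoidHom.inr C P) : Set P) := by
  rintro _ ⟨x, hx, rfl⟩
  rw [Subgroup.mem_normalizer_iff]
  intro τ
  have hconj : x * (1, τ) * x⁻¹ = (1, x.2 * τ * x.2⁻¹) := by
    ext <;> simp
  simp only [Subgroup.mem_comap, MonoidHom.inr_apply, MonoidHom.coe_snd]
  rw [← hconj]
  exact ⟨fun h => H.mul_mem (H.mul_mem hx h) (H.inv_mem hx),
    fun h => by simpa [mul_assoc] using H.mul_mem (H.mul_mem (H.inv_mem hx) h) hx⟩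

theorem Equiv.Perm.normalizer_stabilizer {α : Type*} [DecidableEq α] (h3 : 3 ≤ ENat.card α)
    (a : α) : Subgroup.normalizer (stabilizer (Equiv.Perm α) a : Set (Equiv.Perm α)) =
      stabilizer (Equiv.Perm α) a := by
  refine le_antisymm (fun σ hσ => ?_) Subgroup.le_normalizer
  rw [mem_stabilizer_iff, Equiv.Perm.smul_def]
  by_contra hne
  set b := σ⁻¹ a
  have hba : b ≠ a := fun h => hne (Equiv.Perm.inv_eq_iff_eq.mp h).symm
  obtain ⟨c, hca, hcb⟩ := ENat.exists_ne_ne_of_three_le h3 a b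
  -- `swap b c` fixes `a`, so its conjugate by `σ` does too, i.e. `swap b c` fixes `σ⁻¹ a = b`.
  have hfix : Equiv.swap b c ∈ stabilizer (Equiv.Perm α) a := by
    rw [mem_stabilizer_iff, Equiv.Perm.smul_def]
    exact Equiv.swap_apply_of_ne_of_ne hba.symm hca.symm
  have hconj := (Subgroup.mem_normalizer_iff.mp hσ _).mp hfix
  rw [mem_stabilizer_iff, Equiv.Perm.smul_def, Equiv.Perm.mul_apply, Equiv.Perm.mul_apply,
    Equiv.swap_apply_left, ← Equiv.Perm.eq_inv_iff_eq] at hconj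
  exact hcb hconj

/-- Let `g ≥ 4`. Every subgroup `H` of `ℤ/2ℤ × S_g` that contains
`{0} × S_{g-1}` (with `S_{g-1}` the stabilizer of a point) and contains neither `(1, id)`
nor all of `{0} × S_g` must equal `{0} × S_{g-1}`. -/
theorem stmt6 (g : ℕ) (hg : 4 ≤ g)
    (H : Subgroup (Multiplicative (ZMod 2) × Equiv.Perm (Fin g)))
    (hsub : ∀ σ : Equiv.Perm (Fin g), σ ⟨0, by omega⟩ = ⟨0, by omega⟩ →
      ((1 : Multiplicative (ZMod 2)), σ) ∈ H)
    (hτ : ((Multiplicative.ofAdd (1 : ZMod 2)), (1 : Equiv.Perm (Fin g))) ∉ H)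
    (hSg : ¬ ∀ σ : Equiv.Perm (Fin g), ((1 : Multiplicative (ZMod 2)), σ) ∈ H) :
    ∀ x : Multiplicative (ZMod 2) × Equiv.Perm (Fin g),
      x ∈ H ↔ (x.1 = 1 ∧ x.2 ⟨0, by omega⟩ = ⟨0, by omega⟩) := by
  set z : Fin g := ⟨0, by omega⟩
  have : Nontrivial (Fin g) := Fin.nontrivial_iff_two_le.mpr (by omega)
  have hL : H.comap (MonoidHom.inr _ _) = stabilizer (Equiv.Perm (Fin g)) z := by
    have hcoatom := IsPreprimitive.isCoatom_stabilizer_of_isPreprimitive (Equiv.Perm (Fin g)) z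
    refine (hcoatom.le_iff.mp fun σ hσ => hsub σ hσ).resolve_left fun htop => hSg fun σ => ?_
    exact (htop ▸ Subgroup.mem_top σ : σ ∈ H.comap (MonoidHom.inr _ _))
  have hsnd : ∀ x ∈ H, x.2 z = z := fun x hx => by
    have hx' := H.map_snd_le_normalizer_comap_inr ⟨x, hx, rfl⟩
    rwa [hL, Equiv.Perm.normalizer_stabilizer (by
      simp only [ENat.card_eq_coe_fintype_card, Fintype.card_fin, Nat.ofNat_le_cast]; omega)] at hx'
  rintro ⟨t, σ⟩
  refine ⟨fun hx => ⟨?_, hsnd _ hx⟩, fun ⟨(ht : t = 1), hσ⟩ => ht ▸ hsub σ hσ⟩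
  have ht : (t, (1 : Equiv.Perm (Fin g))) ∈ H := by
    simpa using H.mul_mem hx (H.inv_mem (hsub σ (hsnd _ hx)))
  have hC2 : ∀ s : Multiplicative (ZMod 2), s = 1 ∨ s = Multiplicative.ofAdd 1 := by decide
  obtain rfl | rfl := hC2 t
  · rfl
  · exact absurd ht hτ
end

section
/- Let g be even, G = ℤ/2ℤ × S_g acting on {1,…,2g} by: (ε,σ) sends i ∈ {1,…,g} to σ(i) if ε = 0 and to σ(i)+g if ε = 1, and similarly on {g+1,…,2g} (indices mod 2g, with the involution τ = (1,id) acting as i ↦ i+g mod 2g). Let π₁,…,π_{2g} be distinct nonzero complex numbers with |π_i| = q^{1/2}, π_{i+g} = q/π_i for 1 ≤ i ≤ g, permuted by G compatibly with its action on indices, and satisfying π₁⋯π_g = q^{g/2}. If I ⊆ {1,…,2g} has cardinality 2k, satisfies ∏_{i∈I} π_i = q^k, and the G-orbit of I is not the orbit of I₀ = {1,…,g}, then I is stable under i ↦ i+g mod 2g. -/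
/-!
Put `x i = π (inl i)` and `e i = [inl i ∈ I] - [inr i ∈ I] ∈ {-1, 0, 1}` (`signedIndicator`).
Since `π (inr i) = q / x i`, the relation reads `q ^ n * ∏ x i ^ e i = q ^ k` for some `n`, and
as `S_g` preserves it, `∏ x i ^ e i` does not change when the `x i` are permuted. The
transposition of `a` and `b` multiplies it by `(x b / x a) ^ (e a - e b)`, so
`x a ^ (e a - e b) = x b ^ (e a - e b)`. The `x i` being distinct, `e a - e b = ±1` is impossible
and `e a - e b = ±2` forces `x a = -x b`. Hence either `e = 0`, i.e. `I` is stable under `τ`; or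
`e` is constantly `1` or `-1`, i.e. `I` is one of the two halves, which lie in the orbit of `I₀`;
or `g = 2`, `I = {inl a, inr b}` with `x a = -x b`, and then the relation says `-q = q`.
-/

/-- The action of `(ε, σ) ∈ ℤ/2ℤ × S_g` on `{1,…,2g} = Fin g ⊕ Fin g`: `σ` acts
diagonally and `ε = true` further applies the involution `i ↦ i + g mod 2g`
(swapping the two summands). -/
def weilAct (g : ℕ) (ε : Bool) (σ : Equiv.Perm (Fin g)) : Equiv.Perm (Fin g ⊕ Fin g) :=
  (Equiv.sumCongr σ σ).trans (if ε then Equiv.sumComm (Fin g) (Fin g) else Equiv.refl _)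

open Finset

section PermInvariantMonomial

variable {α K : Type*} [Fintype α] [DecidableEq α]

theorem zpow_sub_eq_of_prod_perm_eq [CommGroupWithZero K] {x : α → K} (hx : ∀ i, x i ≠ 0)
    {e : α → ℤ} (he : ∀ σ : Equiv.Perm α, ∏ i, x (σ i) ^ e i = ∏ i, x i ^ e i) (a b : α) :
    x a ^ (e a - e b) = x b ^ (e a - e b) := by
  rcases eq_or_ne a b with rfl | hab
  · rfl
  have hswap := he (Equiv.swap a b)
  rw [← div_eq_one_iff_eq (prod_ne_zero_iff.2 fun i _ => zpow_ne_zero _ (hx i)),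
    ← prod_div_distrib, Fintype.prod_eq_mul a b hab fun i hi => by
      rw [Equiv.swap_apply_of_ne_of_ne hi.1 hi.2, div_self (zpow_ne_zero _ (hx i))],
    Equiv.swap_apply_left, Equiv.swap_apply_right, div_mul_div_comm,
    div_eq_one_iff_eq (mul_ne_zero (zpow_ne_zero _ (hx a)) (zpow_ne_zero _ (hx b)))] at hswap
  rw [zpow_sub₀ (hx a), zpow_sub₀ (hx b),
    div_eq_div_iff (zpow_ne_zero _ (hx a)) (zpow_ne_zero _ (hx b)), hswap.symm]

theorem sub_ne_one_of_prod_perm_eq [Field K] {x : α → K} (hx : ∀ i, x i ≠ 0)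
    (hinj : Function.Injective x) {e : α → ℤ}
    (he : ∀ σ : Equiv.Perm α, ∏ i, x (σ i) ^ e i = ∏ i, x i ^ e i) (a b : α) : e a - e b ≠ 1 := by
  intro h
  have hxab := zpow_sub_eq_of_prod_perm_eq hx he a b
  rw [h, zpow_one, zpow_one] at hxab
  simp [hinj hxab] at h

theorem eq_neg_of_sub_eq_two_of_prod_perm_eq [Field K] {x : α → K} (hx : ∀ i, x i ≠ 0)
    (hinj : Function.Injective x) {e : α → ℤ}
    (he : ∀ σ : Equiv.Perm α, ∏ i, x (σ i) ^ e i = ∏ i, x i ^ e i) {a b : α}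
    (h : e a - e b = 2) : x a = -x b := by
  have hxab := zpow_sub_eq_of_prod_perm_eq hx he a b
  rw [h] at hxab
  refine (sq_eq_sq_iff_eq_or_eq_neg.1 (by exact_mod_cast hxab)).resolve_left fun hxab => ?_
  simp [hinj hxab] at h

theorem exponent_cases_of_prod_perm_eq [Field K] {x : α → K} (hx : ∀ i, x i ≠ 0)
    (hinj : Function.Injective x) {e : α → ℤ}
    (he : ∀ σ : Equiv.Perm α, ∏ i, x (σ i) ^ e i = ∏ i, x i ^ e i) (he₁ : ∀ i, |e i| ≤ 1) :
    (∀ i, e i = 0) ∨ (∀ i, e i = 1) ∨ (∀ i, e i = -1) ∨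
      ∃ a b, e a = 1 ∧ e b = -1 ∧ x a = -x b ∧ ∀ i, i = a ∨ i = b := by
  have hsub := sub_ne_one_of_prod_perm_eq hx hinj he
  have hopp {a b} := eq_neg_of_sub_eq_two_of_prod_perm_eq hx hinj he (a := a) (b := b)
  have hbound i := abs_le.1 (he₁ i)
  by_cases hpos : ∃ a, e a = 1 <;> by_cases hneg : ∃ b, e b = -1
  · obtain ⟨a, ha⟩ := hpos
    obtain ⟨b, hb⟩ := hneg
    have hab := hopp (a := a) (b := b) (by omega)
    refine Or.inr <| Or.inr <| Or.inr ⟨a, b, ha, hb, hab, fun i => ?_⟩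
    have := hsub a i
    have := hbound i
    rcases (by omega : e i = 1 ∨ e i = -1) with hi | hi
    · exact Or.inl <| hinj <| by rw [hopp (a := i) (b := b) (by omega), hab]
    · exact Or.inr <| hinj <| neg_injective <| by rw [← hopp (a := a) (b := i) (by omega), hab]
  · push Not at hneg
    obtain ⟨a, ha⟩ := hpos
    exact Or.inr <| Or.inl fun i => by have := hsub a i; have := hbound i; have := hneg i; omega
  · push Not at hpos
    obtain ⟨b, hb⟩ := hneg
    exact Or.inr <| Or.inr <| Or.inl fun i => by
      have := hsub i b; have := hbound i; have := hpos i; omega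
  · push Not at hpos hneg
    exact Or.inl fun i => by have := hbound i; have := hpos i; have := hneg i; omega

end PermInvariantMonomial

section SignedIndicator

variable {α : Type*} [DecidableEq α] (s : Finset (α ⊕ α)) (i : α)

def signedIndicator : ℤ := (if Sum.inl i ∈ s then 1 else 0) - (if Sum.inr i ∈ s then 1 else 0)

variable {s i}

theorem signedIndicator_eq_zero_iff :
    signedIndicator s i = 0 ↔ (Sum.inl i ∈ s ↔ Sum.inr i ∈ s) := by
  unfold signedIndicator; split_ifs <;> simp_all

theorem signedIndicator_eq_one_iff :
    signedIndicator s i = 1 ↔ Sum.inl i ∈ s ∧ Sum.inr i ∉ s := by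
  unfold signedIndicator; split_ifs <;> simp_all

theorem signedIndicator_eq_neg_one_iff :
    signedIndicator s i = -1 ↔ Sum.inl i ∉ s ∧ Sum.inr i ∈ s := by
  unfold signedIndicator; split_ifs <;> simp_all

theorem abs_signedIndicator_le_one : |signedIndicator s i| ≤ 1 := by
  unfold signedIndicator; split_ifs <;> simp

theorem image_sumComm_eq_self (h : ∀ i, signedIndicator s i = 0) :
    s.image (Equiv.sumComm α α) = s := by
  ext (i | i) <;> simp [signedIndicator_eq_zero_iff.1 (h i)]

end SignedIndicator

section WeilNumbers

variable {K : Type*} [Field K] {g : ℕ} {q : K} {π : Fin g ⊕ Fin g → K}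

theorem prod_weilAct_false_pow (hne : ∀ i, π (Sum.inl i) ≠ 0)
    (hconj : ∀ i, π (Sum.inr i) = q / π (Sum.inl i)) (σ : Equiv.Perm (Fin g))
    (f : Fin g ⊕ Fin g → ℕ) :
    ∏ j, π (weilAct g false σ j) ^ f j =
      q ^ (∑ i, f (Sum.inr i)) *
        ∏ i, π (Sum.inl (σ i)) ^ ((f (Sum.inl i) : ℤ) - f (Sum.inr i)) := by
  simp only [Fintype.prod_sum_type, weilAct, Bool.false_eq_true, if_false, Equiv.trans_apply,
    Equiv.sumCongr_apply, Sum.map_inl, Sum.map_inr, Equiv.refl_apply, hconj, ← prod_pow_eq_pow_sum,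
    ← prod_mul_distrib]
  refine prod_congr rfl fun i _ => ?_
  rw [zpow_sub₀ (hne _), zpow_natCast, zpow_natCast, div_pow]
  field_simp

theorem prod_zpow_signedIndicator_perm_eq (hq : q ≠ 0) (hne : ∀ i, π (Sum.inl i) ≠ 0)
    (hconj : ∀ i, π (Sum.inr i) = q / π (Sum.inl i))
    (hGal : ∀ (σ : Equiv.Perm (Fin g)) (f : Fin g ⊕ Fin g → ℕ) (k : ℕ),
      ∏ i, π i ^ f i = q ^ k → ∏ i, π (weilAct g false σ i) ^ f i = q ^ k)
    {I : Finset (Fin g ⊕ Fin g)} {k : ℕ} (hI : ∏ j ∈ I, π j = q ^ k) (σ : Equiv.Perm (Fin g)) :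
    ∏ i, π (Sum.inl (σ i)) ^ signedIndicator I i = ∏ i, π (Sum.inl i) ^ signedIndicator I i := by
  classical
  set f : Fin g ⊕ Fin g → ℕ := fun j => if j ∈ I then 1 else 0
  have hf : ∏ j, π j ^ f j = q ^ k := by simpa [f, pow_ite] using hI
  have hσ := hGal σ f k hf
  have h₁ := hGal 1 f k hf
  rw [prod_weilAct_false_pow hne hconj] at hσ h₁
  simp only [f, Nat.cast_ite, Nat.cast_one, Nat.cast_zero] at hσ h₁
  exact mul_left_cancel₀ (pow_ne_zero _ hq) (hσ.trans h₁.symm)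

end WeilNumbers

theorem stmt9_general (g : ℕ) (q : ℝ) (hq : 1 < q)
    (π : Fin g ⊕ Fin g → ℂ)
    (hinj : Function.Injective π)
    (hne : ∀ i, π i ≠ 0)
    (hconj : ∀ i : Fin g, π (Sum.inr i) = (q : ℂ) / π (Sum.inl i))
    (hGal : ∀ (ε : Bool) (σ : Equiv.Perm (Fin g)) (f : Fin g ⊕ Fin g → ℕ) (k : ℕ),
      (∏ i, π i ^ f i) = (q : ℂ) ^ k → (∏ i, π (weilAct g ε σ i) ^ f i) = (q : ℂ) ^ k)
    (I : Finset (Fin g ⊕ Fin g)) (k : ℕ)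
    (hcard : I.card = 2 * k)
    (hrel : (∏ i ∈ I, π i) = (q : ℂ) ^ k)
    (horbit : ¬ ∃ (ε : Bool) (σ : Equiv.Perm (Fin g)),
      ((Finset.univ : Finset (Fin g)).image Sum.inl).image (weilAct g ε σ) = I) :
    I.image (Equiv.sumComm (Fin g) (Fin g)) = I := by
  classical
  have hq0 : (q : ℂ) ≠ 0 := Complex.ofReal_ne_zero.2 (zero_lt_one.trans hq).ne'
  have he := prod_zpow_signedIndicator_perm_eq hq0 (fun i => hne _) hconj (hGal false) hrel
  rcases exponent_cases_of_prod_perm_eq (fun i => hne _) (hinj.comp Sum.inl_injective) he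
    (fun _ => abs_signedIndicator_le_one) with h₀ | h₁ | h₁ | ⟨a, b, ha, hb, hab, huniv⟩
  · exact image_sumComm_eq_self h₀
  · refine (horbit ⟨false, 1, ?_⟩).elim
    ext (i | i) <;> simp [weilAct, signedIndicator_eq_one_iff.1 (h₁ i)]
  · refine (horbit ⟨true, 1, ?_⟩).elim
    ext (i | i) <;> simp [weilAct, signedIndicator_eq_neg_one_iff.1 (h₁ i)]
  · obtain ⟨ha₁, ha₂⟩ := signedIndicator_eq_one_iff.1 ha
    obtain ⟨hb₁, hb₂⟩ := signedIndicator_eq_neg_one_iff.1 hb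
    have hne_ab : a ≠ b := by rintro rfl; omega
    have hI : I = {Sum.inl a, Sum.inr b} := by
      ext (i | i) <;> rcases huniv i with rfl | rfl <;>
        simp [ha₁, ha₂, hb₁, hb₂, hne_ab, hne_ab.symm]
    have hk : k = 1 := by
      rw [hI, card_pair (by simp)] at hcard
      omega
    rw [hI, prod_pair (by simp), hconj, hab, hk, pow_one, neg_mul,
      mul_div_cancel₀ _ (hne _)] at hrel
    exact (hq0 (by linear_combination -hrel / 2)).elim

/-- Let `g` be even, `G = ℤ/2ℤ × S_g` acting on `{1,…,2g}` as in `weilAct`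
(with the involution `τ : i ↦ i + g mod 2g` given by swapping the summands). Let
`π₁,…,π_{2g}` be distinct nonzero complex numbers with `|π_i| = q^{1/2}`,
`π_{i+g} = q/π_i`, permuted by `G` compatibly with its action on indices, and satisfying
`π₁⋯π_g = q^{g/2}`. If `I ⊆ {1,…,2g}` has cardinality `2k`, satisfies `∏_{i∈I} π_i = q^k`,
and the `G`-orbit of `I` is not the orbit of `I₀ = {1,…,g}`, then `I` is stable under
`i ↦ i + g mod 2g`. -/
theorem stmt9 (g m : ℕ) (hgm : g = 2 * m) (q : ℝ) (hq : 1 < q)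
    (π : Fin g ⊕ Fin g → ℂ)
    (hinj : Function.Injective π)
    (hne : ∀ i, π i ≠ 0)
    (habs : ∀ i, ‖π i‖ = Real.sqrt q)
    (hconj : ∀ i : Fin g, π (Sum.inr i) = (q : ℂ) / π (Sum.inl i))
    (hGal : ∀ (ε : Bool) (σ : Equiv.Perm (Fin g)) (f : Fin g ⊕ Fin g → ℕ) (k : ℕ),
      (∏ i, π i ^ f i) = (q : ℂ) ^ k → (∏ i, π (weilAct g ε σ i) ^ f i) = (q : ℂ) ^ k)
    (hprod : (∏ i : Fin g, π (Sum.inl i)) = (q : ℂ) ^ m)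
    (I : Finset (Fin g ⊕ Fin g)) (k : ℕ)
    (hcard : I.card = 2 * k)
    (hrel : (∏ i ∈ I, π i) = (q : ℂ) ^ k)
    (horbit : ¬ ∃ (ε : Bool) (σ : Equiv.Perm (Fin g)),
      ((Finset.univ : Finset (Fin g)).image Sum.inl).image (weilAct g ε σ) = I) :
    I.image (Equiv.sumComm (Fin g) (Fin g)) = I :=
  stmt9_general g q hq π hinj hne hconj hGal I k hcard hrel horbit
end

section
/- Let g be even and let π₁,…,π_{2g} be distinct nonzero complex numbers with π_i·π_{i+g} = q (indices mod 2g, q > 1 real) that are permuted transitively (as a set {π_1,…,π_{2g}}, compatibly with an action on indices {1,…,2g}) by a group G whose action commutes with the involution τ: i ↦ i+g mod 2g. Suppose I ⊆ {1,…,2g} is a set of even cardinality 2r ≤ g such that ∏_{i∈I} π_i = q^r, I ≠ τ(I), and the G-orbit of I is exactly {I, τ(I)}. Then {1,…,2g} = I ∪ τ(I); in particular 2r = g and I ∩ τ(I) = ∅. -/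
/-- Let `g` be even and `π₁,…,π_{2g}` distinct nonzero complex numbers
with `π_i · π_{i+g} = q` (indices mod `2g`, `q > 1` real, modelled on `Fin g ⊕ Fin g` with
`τ` the swap of the two summands), permuted transitively by a group `G` whose action
commutes with `τ`. Suppose `I` is a set of even cardinality `2r ≤ g` with
`∏_{i∈I} π_i = q^r`, `I ≠ τ(I)`, and the `G`-orbit of `I` is exactly `{I, τ(I)}`. Then
`{1,…,2g} = I ∪ τ(I)`, in particular `2r = g` and `I ∩ τ(I) = ∅`. -/
theorem stmt10 (g m : ℕ) (hgm : g = 2 * m) (q : ℝ) (hq : 1 < q)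
    (π : Fin g ⊕ Fin g → ℂ)
    (hinj : Function.Injective π)
    (hne : ∀ i, π i ≠ 0)
    (hconj : ∀ i, π i * π (Equiv.sumComm (Fin g) (Fin g) i) = (q : ℂ))
    (G : Type*) [Group G] [MulAction G (Fin g ⊕ Fin g)]
    [MulAction.IsPretransitive G (Fin g ⊕ Fin g)]
    (hcomm : ∀ (σ : G) (i : Fin g ⊕ Fin g),
      σ • (Equiv.sumComm (Fin g) (Fin g) i) = Equiv.sumComm (Fin g) (Fin g) (σ • i))
    (I : Finset (Fin g ⊕ Fin g)) (r : ℕ)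
    (hcard : I.card = 2 * r) (hle : 2 * r ≤ g)
    (hrel : (∏ i ∈ I, π i) = (q : ℂ) ^ r)
    (hneq : I ≠ I.image (Equiv.sumComm (Fin g) (Fin g)))
    (horb₁ : ∀ σ : G, I.image (σ • ·) = I ∨
      I.image (σ • ·) = I.image (Equiv.sumComm (Fin g) (Fin g)))
    (horb₂ : ∃ σ : G, I.image (σ • ·) = I.image (Equiv.sumComm (Fin g) (Fin g))) :
    I ∪ I.image (Equiv.sumComm (Fin g) (Fin g)) = Finset.univ ∧
      2 * r = g ∧ I ∩ I.image (Equiv.sumComm (Fin g) (Fin g)) = ∅ := by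
  set e := Equiv.sumComm (Fin g) (Fin g) with he
  have hIne : I.Nonempty := by
    rcases I.eq_empty_or_nonempty with h | h
    · exact absurd (by simp [h]) hneq
    · exact h
  have himg : ∀ σ : G, (I.image e).image (σ • ·) = (I.image (σ • ·)).image e := by
    intro σ
    rw [Finset.image_image, Finset.image_image]
    exact Finset.image_congr fun x _ => hcomm σ x
  have hJ : ∀ σ : G, (I ∪ I.image e).image (σ • ·) = I ∪ I.image e := by
    intro σ
    rw [Finset.image_union, himg]
    rcases horb₁ σ with h | h
    · rw [h]
    · rw [h, Finset.image_image]
      have : (e : (Fin g ⊕ Fin g) → _) ∘ e = id := by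
        funext x; simp [he]
      rw [this, Finset.image_id, Finset.union_comm]
  have huniv : I ∪ I.image e = Finset.univ := by
    obtain ⟨x, hx⟩ := hIne
    apply Finset.eq_univ_of_forall
    intro y
    obtain ⟨σ, hσ⟩ := MulAction.exists_smul_eq G x y
    rw [← hJ σ]
    exact Finset.mem_image.2 ⟨x, Finset.mem_union_left _ hx, hσ⟩
  have hcard_e : (I.image e).card = 2 * r := by
    rw [Finset.card_image_of_injective _ e.injective, hcard]
  have hunion_card : (I ∪ I.image e).card = g + g := by
    rw [huniv]; simp
  have hsum := Finset.card_union_add_card_inter I (I.image e)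
  rw [hunion_card, hcard, hcard_e] at hsum
  refine ⟨huniv, by omega, Finset.card_eq_zero.mp (by omega)⟩
end

section
/- Let q > 1 be real, g even, and π₁,…,π_{2g} distinct complex numbers of absolute value q^{1/2} with π_{i+g} = q/π_i (indices mod 2g). Suppose ∏_{i=1}^{g} π_i = q^{g/2} and suppose there exists a permutation group acting on indices as the full S_g on {1,…,g} extended compatibly with i ↦ i+g, permuting the π_i. If I ⊆ {1,…,2g} with 0 < |I| = 2k < g satisfies ∏_{i∈I} π_i = q^k and no i ∈ I has i+g mod 2g ∈ I, then a contradiction follows; hence any such relation with |I| < g forces I to contain a pair {i, i+g mod 2g}. -/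
open Finset

namespace Sum

variable {α : Type*}

theorem elim_id_id_map (f : α → α) (x : α ⊕ α) :
    Sum.elim id id (Sum.map f f x) = f (Sum.elim id id x) := by
  cases x <;> rfl

theorem map_eq_self_of_apply_elim_id_id {f : α → α} {x : α ⊕ α}
    (h : f (Sum.elim id id x) = Sum.elim id id x) : Sum.map f f x = x := by
  cases x <;> simpa using h

theorem injOn_elim_id_id_of_forall_swap_notMem {I : Finset (α ⊕ α)}
    (hI : ∀ i ∈ I, i.swap ∉ I) : Set.InjOn (Sum.elim id id) (I : Set (α ⊕ α)) := by
  rintro (x | x) hx (y | y) hy (hxy : x = y) <;> subst hxy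
  · rfl
  · exact absurd hy (hI _ hx)
  · exact absurd hy (hI _ hx)
  · rfl

end Sum

theorem weilAct_false (g : ℕ) (σ : Equiv.Perm (Fin g)) :
    ⇑(weilAct g false σ) = Sum.map σ σ := by
  ext i
  simp [weilAct]

theorem Finset.prod_pow_ite_mem {ι M : Type*} [Fintype ι] [DecidableEq ι] [CommMonoid M]
    (I : Finset ι) (x : ι → M) :
    ∏ i, x i ^ (if i ∈ I then 1 else 0) = ∏ i ∈ I, x i := by
  simp only [pow_ite, pow_one, pow_zero, prod_ite_mem, univ_inter]

theorem Finset.apply_eq_of_prod_comp_eq_prod {ι M : Type*} [DecidableEq ι]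
    [CommMonoidWithZero M] [IsRightCancelMulZero M] {I : Finset ι} {x : ι → M} {τ : ι → ι}
    {a : ι} (ha : a ∈ I)
    (hτ : ∀ i ∈ I, i ≠ a → τ i = i) (hx : ∏ i ∈ I, x i ≠ 0)
    (h : ∏ i ∈ I, x (τ i) = ∏ i ∈ I, x i) : x (τ a) = x a := by
  have hrest : ∏ i ∈ I.erase a, x (τ i) = ∏ i ∈ I.erase a, x i :=
    prod_congr rfl fun i hi => by rw [hτ i (mem_of_mem_erase hi) (ne_of_mem_erase hi)]
  rw [← mul_prod_erase I _ ha, ← mul_prod_erase I _ ha, hrest] at h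
  rw [← mul_prod_erase I _ ha] at hx
  exact mul_right_cancel₀ (right_ne_zero_of_mul hx) h

theorem stmt16_general (g : ℕ) (q : ℝ) (hq : 1 < q)
    (π : Fin g ⊕ Fin g → ℂ)
    (hinj : Function.Injective π)
    (hGal : ∀ (ε : Bool) (σ : Equiv.Perm (Fin g)) (f : Fin g ⊕ Fin g → ℕ) (k : ℕ),
      (∏ i, π i ^ f i) = (q : ℂ) ^ k → (∏ i, π (weilAct g ε σ i) ^ f i) = (q : ℂ) ^ k)
    (I : Finset (Fin g ⊕ Fin g)) (k : ℕ)
    (hcard : I.card = 2 * k) (hpos : 0 < 2 * k) (hlt : 2 * k < g)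
    (hrel : (∏ i ∈ I, π i) = (q : ℂ) ^ k)
    (hnopair : ∀ i ∈ I, Equiv.sumComm (Fin g) (Fin g) i ∉ I) :
    False := by
  obtain ⟨a, ha⟩ := card_pos.mp (hcard ▸ hpos)
  obtain ⟨j, -, hj⟩ := exists_mem_notMem_of_card_lt_card (s := I.image (Sum.elim id id))
    (t := univ) (by simpa using card_image_le.trans_lt (hcard ▸ hlt))
  set σ := Equiv.swap (Sum.elim id id a) j
  have hinjOn : Set.InjOn (Sum.elim id id) (I : Set (Fin g ⊕ Fin g)) :=
    Sum.injOn_elim_id_id_of_forall_swap_notMem hnopair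
  have hfix : ∀ i ∈ I, i ≠ a → Sum.map σ σ i = i := fun i hi hia =>
    Sum.map_eq_self_of_apply_elim_id_id <| Equiv.swap_apply_of_ne_of_ne
      (fun h => hia (hinjOn hi ha h)) (fun h => hj (h ▸ mem_image_of_mem _ hi))
  have hmoved : ∏ i ∈ I, π (Sum.map σ σ i) = (q : ℂ) ^ k := by
    have := hGal false σ (fun i => if i ∈ I then 1 else 0) k (by rwa [prod_pow_ite_mem])
    rwa [prod_pow_ite_mem, weilAct_false] at this
  have hq0 : (q : ℂ) ^ k ≠ 0 := pow_ne_zero _ (by exact_mod_cast (zero_lt_one.trans hq).ne')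
  have hσa := congrArg (Sum.elim id id) <| hinj <|
    apply_eq_of_prod_comp_eq_prod ha hfix (hrel ▸ hq0) (hmoved.trans hrel.symm)
  rw [Sum.elim_id_id_map, Equiv.swap_apply_left] at hσa
  exact hj (hσa ▸ mem_image_of_mem _ ha)

/-- Let `q > 1` be real, `g` even, and `π₁,…,π_{2g}` distinct complex
numbers of absolute value `q^{1/2}` with `π_{i+g} = q/π_i`. Suppose `∏_{i=1}^{g} π_i =
q^{g/2}`, and the full group `μ₂ × S_g` permutes the `π_i` compatibly with its action on
indices (preserving all multiplicative relations with powers of `q`). If `I ⊆ {1,…,2g}`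
with `0 < |I| = 2k < g` satisfies `∏_{i∈I} π_i = q^k` and no `i ∈ I` has
`i + g mod 2g ∈ I`, then a contradiction follows. -/
theorem stmt16 (g m : ℕ) (hgm : g = 2 * m) (q : ℝ) (hq : 1 < q)
    (π : Fin g ⊕ Fin g → ℂ)
    (hinj : Function.Injective π)
    (habs : ∀ i, ‖π i‖ = Real.sqrt q)
    (hconj : ∀ i : Fin g, π (Sum.inr i) = (q : ℂ) / π (Sum.inl i))
    (hprod : (∏ i : Fin g, π (Sum.inl i)) = (q : ℂ) ^ m)
    (hGal : ∀ (ε : Bool) (σ : Equiv.Perm (Fin g)) (f : Fin g ⊕ Fin g → ℕ) (k : ℕ),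
      (∏ i, π i ^ f i) = (q : ℂ) ^ k → (∏ i, π (weilAct g ε σ i) ^ f i) = (q : ℂ) ^ k)
    (I : Finset (Fin g ⊕ Fin g)) (k : ℕ)
    (hcard : I.card = 2 * k) (hpos : 0 < 2 * k) (hlt : 2 * k < g)
    (hrel : (∏ i ∈ I, π i) = (q : ℂ) ^ k)
    (hnopair : ∀ i ∈ I, Equiv.sumComm (Fin g) (Fin g) i ∉ I) :
    False :=
  stmt16_general g q hq π hinj hGal I k hcard hpos hlt hrel hnopair
end

section
/- Let L be a CM field of degree 2g (g even) with totally real subfield R and an imaginary quadratic subfield Q, and let π ∈ L be a Weil q-number with ℚ(π) = L. If p is inert in Q, then there exists a positive integer w such that N_{L/Q}(π)^{2w} = q^{wg}, i.e., some power of the norm N_{L/Q}(π) equals the corresponding power of q^{g/2}. -/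
/-!
Put `β = N_{L/Q}(π)`. Every conjugate of `β` has absolute value `q^{g/2}`, so `γ = β² / q^g` has
all its conjugates on the unit circle; in particular `N_{Q/ℚ}(γ) = ±1`, and `q^g γ = β²` is
integral, so `Tr_{Q/ℚ}(γ) ∈ ℤ[1/p]`. Since `p` is inert, `X² - Tr(γ) X + N(γ)` has no root in
`ℚ_p` unless `γ ∈ ℚ`, and Hensel's lemma turns this into `|Tr γ|_p² ≤ |N γ|_p = 1`. Hence
`Tr γ ∈ ℤ`, `γ` is an algebraic integer, and Kronecker's theorem makes it a root of unity.
-/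

open NumberField Module
open scoped TensorProduct

open Polynomial in
theorem Algebra.sq_sub_trace_mul_add_norm {F K : Type*} [Field F] [Field K] [Algebra F K]
    (h2 : finrank F K = 2) (x : K) :
    x ^ 2 - algebraMap F K (Algebra.trace F K x) * x + algebraMap F K (Algebra.norm F x) = 0 := by
  have : Module.Finite F K := Module.finite_of_finrank_eq_succ h2
  let b := finBasisOfFinrankEq F K h2
  have hx : aeval x (leftMulMatrix b x).charpoly = 0 := by
    apply Algebra.leftMulMatrix_injective b
    rw [← Polynomial.aeval_algHom_apply, Matrix.aeval_self_charpoly, map_zero]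
  rwa [Matrix.charpoly_fin_two, ← trace_eq_matrix_trace, ← norm_eq_matrix_det, map_add, map_sub,
    map_mul, aeval_C, aeval_C, aeval_X_pow, aeval_X] at hx

theorem Algebra.TensorProduct.mem_range_algebraMap_of_includeRight_mem_range
    {F A K : Type*} [Field F] [CommRing A] [Nontrivial A] [CommRing K] [Algebra F A] [Algebra F K]
    {x : K} (hx : includeRight x ∈ Set.range (algebraMap A (A ⊗[F] K))) :
    x ∈ Set.range (algebraMap F K) := by
  have hmem : includeRight x ∈ (includeLeft : A →ₐ[F] A ⊗[F] K).range ⊓ includeRight.range :=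
    ⟨hx, x, rfl⟩
  rw [(Subalgebra.LinearDisjoint.include_range F A K).inf_eq_bot] at hmem
  obtain ⟨r, hr⟩ := Algebra.mem_bot.1 hmem
  refine ⟨r, includeRight_injective (algebraMap F A).injective ?_⟩
  rw [AlgHom.commutes]
  exact hr

theorem mem_range_algebraMap_of_isField_tensorProduct {F A K : Type*} [Field F] [CommRing A]
    [CommRing K] [Algebra F A] [Algebra F K] (hAK : IsField (A ⊗[F] K)) {a c : F} {x : K}
    (hx : x ^ 2 - algebraMap F K a * x + algebraMap F K c = 0) {z : A}
    (hz : z ^ 2 - algebraMap F A a * z + algebraMap F A c = 0) :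
    x ∈ Set.range (algebraMap F K) := by
  have := hAK.isDomain
  have : Nontrivial A :=
    (Algebra.TensorProduct.includeLeftRingHom (R := F) (A := A) (B := K)).domain_nontrivial
  set x' : A ⊗[F] K := Algebra.TensorProduct.includeRight x
  set φ := algebraMap A (A ⊗[F] K)
  have hx' := congrArg (Algebra.TensorProduct.includeRight (R := F) (A := A)) hx
  simp only [map_add, map_sub, map_mul, map_pow, AlgHom.commutes, map_zero,
    IsScalarTower.algebraMap_apply F A (A ⊗[F] K)] at hx'
  have hz' := congrArg φ hz
  simp only [map_add, map_sub, map_mul, map_pow, map_zero] at hz'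
  have hfactor : (x' - φ z) * (x' - (φ (algebraMap F A a) - φ z)) = 0 := by
    linear_combination hx' - hz'
  apply Algebra.TensorProduct.mem_range_algebraMap_of_includeRight_mem_range (A := A)
  rcases mul_eq_zero.1 hfactor with h | h
  · exact ⟨z, (sub_eq_zero.1 h).symm⟩
  · exact ⟨algebraMap F A a - z, by rw [map_sub]; exact (sub_eq_zero.1 h).symm⟩

open Polynomial in
theorem Padic.exists_sq_sub_mul_add_eq_zero {p : ℕ} [Fact p.Prime] {a b : ℚ_[p]}
    (h : ‖b‖ < ‖a‖ ^ 2) : ∃ z : ℚ_[p], z ^ 2 - a * z + b = 0 := by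
  have ha : a ≠ 0 := by rintro rfl; simp at h; linarith [norm_nonneg b]
  have hs : ‖b / a ^ 2‖ < 1 := by
    rwa [norm_div, norm_pow, div_lt_one (by positivity)]
  let s : ℤ_[p] := ⟨b / a ^ 2, hs.le⟩
  have hhensel : ‖(X ^ 2 - X + C s : ℤ_[p][X]).eval 0‖ <
      ‖(derivative (X ^ 2 - X + C s : ℤ_[p][X])).eval 0‖ ^ 2 := by
    simp only [eval_add, eval_sub, eval_pow, eval_X, eval_C, derivative_add, derivative_sub,
      derivative_X_pow, derivative_X, derivative_C]
    norm_num
    exact hs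
  obtain ⟨y, hy, -⟩ := hensels_lemma hhensel
  refine ⟨a * y, ?_⟩
  have hy' : (y : ℚ_[p]) ^ 2 - y + b / a ^ 2 = 0 := by
    simpa using congrArg ((↑) : ℤ_[p] → ℚ_[p]) (by simpa using hy : y ^ 2 - y + s = 0)
  field_simp at hy'
  linear_combination hy'

theorem Padic.norm_trace_sq_le_norm_norm {p : ℕ} [Fact p.Prime] {K : Type*} [Field K]
    [Algebra ℚ K] (h2 : finrank ℚ K = 2) (hinert : IsField (ℚ_[p] ⊗[ℚ] K)) (x : K) :
    ‖(Algebra.trace ℚ K x : ℚ_[p])‖ ^ 2 ≤ ‖(Algebra.norm ℚ x : ℚ_[p])‖ := by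
  by_contra! hlt
  obtain ⟨z, hz⟩ := exists_sq_sub_mul_add_eq_zero hlt
  obtain ⟨r, rfl⟩ := mem_range_algebraMap_of_isField_tensorProduct hinert
    (Algebra.sq_sub_trace_mul_add_norm h2 x) (z := z) (by simpa [eq_ratCast] using hz)
  rw [Algebra.trace_algebraMap, Algebra.norm_algebraMap, h2] at hlt
  have h2le : ‖((2 : ℤ) : ℚ_[p])‖ ≤ 1 := norm_int_le_one 2
  rw [nsmul_eq_mul] at hlt
  push_cast at hlt h2le
  rw [norm_pow, norm_mul, mul_pow] at hlt
  have : ‖(2 : ℚ_[p])‖ ^ 2 * ‖(r : ℚ_[p])‖ ^ 2 ≤ ‖(r : ℚ_[p])‖ ^ 2 :=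
    mul_le_of_le_one_left (by positivity) (pow_le_one₀ (norm_nonneg _) h2le)
  exact this.not_gt hlt

theorem Padic.exists_int_eq_of_norm_le_one {p : ℕ} [Fact p.Prime] {r : ℚ} {m : ℤ} {k : ℕ}
    (hm : p ^ k * r = m) (hr : ‖(r : ℚ_[p])‖ ≤ 1) : ∃ t : ℤ, r = t := by
  have hdvd : (p : ℤ) ^ k ∣ m := by
    rw [← norm_int_le_pow_iff_dvd, ← Rat.cast_intCast, ← hm]
    push_cast
    rw [norm_mul, norm_p_pow]
    exact mul_le_of_le_one_right (by positivity) hr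
  obtain ⟨t, rfl⟩ := hdvd
  refine ⟨t, mul_left_cancel₀ (pow_ne_zero k (Nat.cast_ne_zero.2 (Fact.out : p.Prime).ne_zero)) ?_⟩
  rw [hm]
  push_cast
  ring

open Polynomial in
theorem isIntegral_of_finrank_eq_two {K : Type*} [Field K] [Algebra ℚ K] (h2 : finrank ℚ K = 2)
    {x : K} {t c : ℤ} (ht : Algebra.trace ℚ K x = t) (hc : Algebra.norm ℚ x = c) :
    IsIntegral ℤ x := by
  refine ⟨X ^ 2 - C t * X + C c, ?_, ?_⟩
  · monicity!
  · simp only [eval₂_add, eval₂_sub, eval₂_mul, eval₂_X_pow, eval₂_X, eval₂_C]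
    simpa [ht, hc] using Algebra.sq_sub_trace_mul_add_norm h2 x

theorem norm_apply_algebraNorm_eq_pow {F L : Type*} [Field F] [Field L] [Algebra F L]
    [FiniteDimensional F L] [Algebra.IsSeparable F L] (σ : F →+* ℂ) {x : L} {c : ℝ}
    (hx : ∀ τ : L →+* ℂ, ‖τ x‖ = c) :
    ‖σ (Algebra.norm F x)‖ = c ^ finrank F L := by
  let _ : Algebra F ℂ := σ.toAlgebra
  rw [show σ (Algebra.norm F x) = _ from Algebra.norm_eq_prod_embeddings F ℂ x, norm_prod]
  have hx' (τ : L →ₐ[F] ℂ) : ‖τ x‖ = c := hx τ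
  simp only [hx', Finset.prod_const, Finset.card_univ, AlgHom.card]

theorem isIntegral_of_pow_mul_of_forall_norm_eq_one {p : ℕ} [Fact p.Prime] {K : Type*} [Field K]
    [NumberField K] (h2 : finrank ℚ K = 2) (hinert : IsField (ℚ_[p] ⊗[ℚ] K)) {x : K} {k : ℕ}
    (hint : IsIntegral ℤ ((p : K) ^ k * x)) (habs : ∀ σ : K →+* ℂ, ‖σ x‖ = 1) :
    IsIntegral ℤ x := by
  obtain ⟨c, hc⟩ : ∃ c : ℤ, Algebra.norm ℚ x = c := by
    have h := norm_apply_algebraNorm_eq_pow (algebraMap ℚ ℂ) habs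
    rw [one_pow, eq_ratCast, Complex.norm_ratCast] at h
    rcases abs_eq zero_le_one |>.1 h with h | h
    · exact ⟨1, by exact_mod_cast h⟩
    · exact ⟨-1, by exact_mod_cast h⟩
  obtain ⟨m, hm⟩ : ∃ m : ℤ, algebraMap ℤ ℚ m = Algebra.trace ℚ K ((p : K) ^ k * x) :=
    IsIntegrallyClosed.isIntegral_iff.mp (Algebra.isIntegral_trace hint)
  have hm' : p ^ k * Algebra.trace ℚ K x = m := by
    rw [eq_intCast] at hm
    rw [hm, show (p : K) ^ k * x = ((p : ℚ) ^ k) • x by simp [Algebra.smul_def], map_smul,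
      smul_eq_mul]
  have htr : ‖(Algebra.trace ℚ K x : ℚ_[p])‖ ≤ 1 := by
    have h := (Padic.norm_trace_sq_le_norm_norm h2 hinert x).trans
      (by simpa [hc] using Padic.norm_int_le_one (p := p) c)
    exact (pow_le_one_iff_of_nonneg (norm_nonneg _) two_ne_zero).1 h
  obtain ⟨t, ht⟩ := Padic.exists_int_eq_of_norm_le_one hm' htr
  exact isIntegral_of_finrank_eq_two h2 ht hc

theorem stmt17_general (g : ℕ) (p n q : ℕ) [Fact p.Prime]
    (hq : q = p ^ n)
    (L : Type*) [Field L] [NumberField L]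
    (hLdeg : finrank ℚ L = 2 * g)
    (Q : IntermediateField ℚ L)
    (hQdeg : finrank ℚ Q = 2)
    (hQinert : IsField (ℚ_[p] ⊗[ℚ] Q))
    (π : L) (hint : IsIntegral ℤ π)
    (habs : ∀ σ : L →+* ℂ, ‖σ π‖ = Real.sqrt q) :
    ∃ w : ℕ, 0 < w ∧ (Algebra.norm Q π) ^ (2 * w) = (q : Q) ^ (w * g) := by
  have hQL : finrank Q L = g := by
    have h := Module.finrank_mul_finrank ℚ Q L
    rw [hQdeg, hLdeg] at h
    omega
  set β := Algebra.norm Q π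
  have hq0 : q ≠ 0 := hq ▸ pow_ne_zero n (Fact.out : p.Prime).ne_zero
  have hqg : (q : Q) ^ g ≠ 0 := pow_ne_zero g (Nat.cast_ne_zero.2 hq0)
  have hγabs (σ : Q →+* ℂ) : ‖σ (β ^ 2 / q ^ g)‖ = 1 := by
    rw [map_div₀, map_pow, map_pow, map_natCast, norm_div, norm_pow, norm_pow,
      norm_apply_algebraNorm_eq_pow σ habs, hQL, Complex.norm_natCast, ← pow_mul, mul_comm,
      pow_mul, Real.sq_sqrt (Nat.cast_nonneg q), div_self (pow_ne_zero g (Nat.cast_ne_zero.2 hq0))]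
  have hγint : IsIntegral ℤ (β ^ 2 / q ^ g) := by
    refine isIntegral_of_pow_mul_of_forall_norm_eq_one hQdeg hQinert (k := n * g) ?_ hγabs
    rw [pow_mul, ← Nat.cast_pow, ← hq, mul_div_cancel₀ _ hqg]
    exact (Algebra.isIntegral_norm Q hint).pow 2
  obtain ⟨w, hw, hγw⟩ := Embeddings.pow_eq_one_of_norm_eq_one Q ℂ hγint hγabs
  rw [div_pow, div_eq_one_iff_eq (pow_ne_zero w hqg)] at hγw
  exact ⟨w, hw, by rw [pow_mul, hγw, ← pow_mul, mul_comm]⟩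

/-- Let `L` be a CM field of degree `2g` (`g` even) with totally real
subfield `R` and an imaginary quadratic subfield `Q`, and let `π ∈ L` be a Weil `q`-number
with `ℚ(π) = L`. If `p` is inert in `Q`, then there exists a positive integer `w` with
`N_{L/Q}(π)^{2w} = q^{wg}`. -/
theorem stmt17 (g : ℕ) (hge : Even g) (hg : 0 < g) (p n q : ℕ) [Fact p.Prime]
    (hn : 0 < n) (hq : q = p ^ n)
    (L : Type*) [Field L] [NumberField L]
    (hLdeg : finrank ℚ L = 2 * g)
    (hLimag : ∀ σ : L →+* ℂ, ∃ x : L, (σ x).im ≠ 0)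
    (R : IntermediateField ℚ L)
    (hRdeg : finrank ℚ R = g)
    (hRreal : ∀ σ : L →+* ℂ, ∀ x ∈ R, (σ x).im = 0)
    (Q : IntermediateField ℚ L)
    (hQdeg : finrank ℚ Q = 2)
    (hQimag : ∀ σ : Q →+* ℂ, ∃ x : Q, (σ x).im ≠ 0)
    (hQinert : IsField (ℚ_[p] ⊗[ℚ] Q))
    (π : L) (hint : IsIntegral ℤ π)
    (habs : ∀ σ : L →+* ℂ, ‖σ π‖ = Real.sqrt q)
    (hgen : IntermediateField.adjoin ℚ ({π} : Set L) = ⊤) :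
    ∃ w : ℕ, 0 < w ∧ (Algebra.norm Q π) ^ (2 * w) = (q : Q) ^ (w * g) :=
  stmt17_general g p n q hq L hLdeg Q hQdeg hQinert π hint habs
end
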